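/- arXiv:1709.01441 — 5 statements merged into one kernel-verified Lean document; each statement's English description precedes it below -/
import Mathlib

section
/- Let n ∈ ℕ and let a ∈ ℤ, b, c ∈ ℕ with a ≥ -b and c ≥ n·b. Then there exist finite subsets 𝕀_I ⊆ ℕ indexed by subsets I ⊆ {1,…,n} such that for all I, J ⊆ {1,…,n}, |𝕀_I ∩ 𝕀_J| = a·|I ∩ J| - b·|I △ J| + c, where △ denotes symmetric difference. -/
/-!
Take pairwise disjoint blocks `A`, `B_i`, `C_i` of sizes `c - n b`, `b`, `a + b` and let `𝕀_I`
consist of `A`, the `B_i` with `i ∉ I` and the `C_i` with `i ∈ I`. Then `𝕀_I ∩ 𝕀_J` consists of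
`A`, the `B_i` with `i ∉ I ∪ J` and the `C_i` with `i ∈ I ∩ J`, so its size is
`(c - n b) + b |(I ∪ J)ᶜ| + (a + b) |I ∩ J|`, which is the claimed value because
`|(I ∪ J)ᶜ| = n - |I ∩ J| - |I △ J|`. The blocks live in a finite sum type embedded into `ℕ`.
-/

open Finset

theorem Finset.disjSum_inter_disjSum {α β : Type*} [DecidableEq α] [DecidableEq β]
    (s s' : Finset α) (t t' : Finset β) :
    s.disjSum t ∩ s'.disjSum t' = (s ∩ s').disjSum (t ∩ t') := by
  ext (x | x) <;> simp

theorem Finset.card_symmDiff_add_card_inter {α : Type*} [DecidableEq α] (s t : Finset α) :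
    #(symmDiff s t) + #(s ∩ t) = #(s ∪ t) := by
  rw [symmDiff_eq_sup_sdiff_inf]
  exact card_sdiff_add_card_eq_card inter_subset_union

section BlockFamily

variable (ι : Type*) [Fintype ι] [DecidableEq ι] (m b d : ℕ)

/-- `A ∪ ⋃_{i ∉ I} B_i ∪ ⋃_{i ∈ I} C_i` with `|A| = m`, `|B_i| = b`, `|C_i| = d`. -/
def blockFamily (I : Finset ι) : Finset (Fin m ⊕ (ι × Fin b) ⊕ (ι × Fin d)) :=
  univ.disjSum ((Iᶜ ×ˢ univ).disjSum (I ×ˢ univ))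

variable {ι}

theorem card_blockFamily_inter (I J : Finset ι) :
    #(blockFamily ι m b d I ∩ blockFamily ι m b d J) = m + b * #(I ∪ J)ᶜ + d * #(I ∩ J) := by
  simp only [blockFamily, disjSum_inter_disjSum, product_inter_product, inter_self,
    ← compl_union, card_disjSum, card_product, card_univ, Fintype.card_fin]
  ring

theorem card_blockFamily_inter_eq_symmDiff (I J : Finset ι) :
    (#(blockFamily ι m b d I ∩ blockFamily ι m b d J) : ℤ) =
      ((d : ℤ) - b) * #(I ∩ J) - b * #(symmDiff I J) + (m + Fintype.card ι * b) := by
  have hsymm : (#(symmDiff I J) : ℤ) + #(I ∩ J) = #(I ∪ J) :=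
    mod_cast card_symmDiff_add_card_inter I J
  have hcompl : (#(I ∪ J) : ℤ) + #(I ∪ J)ᶜ = Fintype.card ι :=
    mod_cast card_add_card_compl (I ∪ J)
  rw [card_blockFamily_inter]
  push_cast
  linear_combination (b : ℤ) * (hsymm + hcompl)

end BlockFamily

/-- For `n ∈ ℕ`, `a ∈ ℤ`, `b c ∈ ℕ` with `a ≥ -b` and `c ≥ n·b`, there exist finite subsets
`𝕀 I ⊆ ℕ` indexed by the subsets `I` of `{1,…,n}` such that for all `I, J`,
`|𝕀 I ∩ 𝕀 J| = a·|I ∩ J| - b·|I △ J| + c`. -/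
theorem stmt2 (n : ℕ) (a : ℤ) (b c : ℕ) (ha : -(b : ℤ) ≤ a) (hc : (n : ℤ) * b ≤ c) :
    ∃ 𝕀 : Finset (Fin n) → Finset ℕ, ∀ I J : Finset (Fin n),
      ((𝕀 I ∩ 𝕀 J).card : ℤ) =
        a * ((I ∩ J).card : ℤ) - (b : ℤ) * ((symmDiff I J).card : ℤ) + (c : ℤ) := by
  have hd : ((a + b).toNat : ℤ) - b = a := by rw [Int.toNat_of_nonneg (by omega)]; ring
  have hm : ((c - n * b : ℕ) : ℤ) + Fintype.card (Fin n) * b = c := by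
    rw [Fintype.card_fin, Nat.cast_sub (by exact_mod_cast hc)]; push_cast; ring
  refine ⟨fun I => (blockFamily (Fin n) (c - n * b) b (a + b).toNat I).map (Encodable.encode' _),
    fun I J => ?_⟩
  rw [← map_inter, card_map, card_blockFamily_inter_eq_symmDiff, hd, hm]
end

section
/- Under the simple mosaic model, the correlation between Z_M(x) and Z_M(y) equals ψ_N(1 + 2p_{xy} - p_x - p_y), where ψ_N is the probability generating function of N. Precisely: E[Z_M(x)Z_M(y)] = Var(U)·ψ_N(1+2p_{xy}-p_x-p_y) + (EU)², E[Z_M(x)] = EU, and Var(Z_M(x)) = Var(U). -/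
/-!
Let `G = (I_x, I_y)` be the pair of index sets of the cells containing `x` and `y`. It is
measurable with respect to `σ(N, B_1, B_2, …)`, which is independent of the values `U_I`, so
conditionally on `G` the product `Z_M(x) Z_M(y) = U_{I_x} U_{I_y}` has mean `E[U²]` on
`{I_x = I_y}` and `(EU)²` off it. Hence `E[Z_M(x) Z_M(y)] = (EU)² + Var(U) · P(I_x = I_y)`.
Finally `I_x = I_y` happens exactly when, for `N = n`, each of `B_1, …, B_n` contains both or
neither of `x` and `y`; by independence this has probability `P(N = n) · t ^ n` with
`t = 1 + 2 p_{xy} - p_x - p_y`, and summing over `n` gives `ψ_N(t)`.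
-/

open MeasureTheory ProbabilityTheory Finset
open scoped Classical ENNReal

section RandomIndex

variable {Ω ι : Type*} {m mΩ : MeasurableSpace Ω} {P : Measure Ω} {G : Ω → ι}

theorem iUnion_setOf_apply_eq (G : Ω → ι) : ⋃ i, {ω | G ω = i} = Set.univ :=
  Set.iUnion_eq_univ_iff.2 fun ω => ⟨G ω, rfl⟩

theorem pairwise_disjoint_setOf_apply_eq (G : Ω → ι) :
    Pairwise (Function.onFun Disjoint fun i => {ω | G ω = i}) :=
  pairwise_disjoint_fiber G

variable [Countable ι]

theorem measurable_apply_of_measurableSet_fiber {β : Type*} [MeasurableSpace β]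
    {f : ι → Ω → β} (hG : ∀ i, MeasurableSet {ω | G ω = i}) (hf : ∀ i, Measurable (f i)) :
    Measurable fun ω => f (G ω) ω := by
  intro s hs
  have hpre : (fun ω => f (G ω) ω) ⁻¹' s = ⋃ i, {ω | G ω = i} ∩ f i ⁻¹' s := by
    ext ω
    simp
  rw [hpre]
  exact .iUnion fun i => (hG i).inter (hf i hs)

theorem setLIntegral_eq_measure_mul_of_indep {Mf : MeasurableSpace Ω} {A : Set Ω}
    {f : Ω → ℝ≥0∞} (hm : m ≤ mΩ) (hMf : Mf ≤ mΩ) (hind : Indep m Mf P)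
    (hA : MeasurableSet[m] A) (hf : Measurable[Mf] f) :
    ∫⁻ ω in A, f ω ∂P = P A * ∫⁻ ω, f ω ∂P := by
  rw [← lintegral_indicator (hm A hA), ← lintegral_indicator_one (hm A hA),
    ← lintegral_mul_eq_lintegral_mul_lintegral_of_independent_measurableSpace hm hMf hind
      (Measurable.indicator (f := 1) measurable_const hA) hf]
  congr with ω
  by_cases hω : ω ∈ A <;> simp [hω]

theorem lintegral_apply_index_eq_tsum_of_indep (hm : m ≤ mΩ)
    (hG : ∀ i, MeasurableSet[m] {ω | G ω = i})
    {mf : ι → MeasurableSpace Ω} (hmf : ∀ i, mf i ≤ mΩ) (hind : ∀ i, Indep m (mf i) P)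
    {f : ι → Ω → ℝ≥0∞} (hf : ∀ i, Measurable[mf i] (f i)) :
    ∫⁻ ω, f (G ω) ω ∂P = ∑' i, P {ω | G ω = i} * ∫⁻ ω, f i ω ∂P := by
  calc ∫⁻ ω, f (G ω) ω ∂P = ∑' i, ∫⁻ ω in {ω | G ω = i}, f (G ω) ω ∂P := by
        rw [← lintegral_iUnion (fun i => hm _ (hG i)) (pairwise_disjoint_setOf_apply_eq G),
          iUnion_setOf_apply_eq, setLIntegral_univ]
    _ = ∑' i, ∫⁻ ω in {ω | G ω = i}, f i ω ∂P := by
        congr with i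
        exact setLIntegral_congr_fun (hm _ (hG i)) fun ω (hω : G ω = i) => by rw [hω]
    _ = ∑' i, P {ω | G ω = i} * ∫⁻ ω, f i ω ∂P := by
        congr with i
        exact setLIntegral_eq_measure_mul_of_indep hm (hmf i) (hind i) (hG i) (hf i)

variable [IsFiniteMeasure P] {f : ι → Ω → ℝ} {L : ℝ≥0∞}

theorem integrable_apply_index_of_indep (hm : m ≤ mΩ)
    (hG : ∀ i, MeasurableSet[m] {ω | G ω = i}) (hf : ∀ i, Measurable (f i))
    (hind : ∀ i, Indep m (MeasurableSpace.comap (f i) inferInstance) P)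
    (hL : ∀ i, ∫⁻ ω, ‖f i ω‖ₑ ∂P ≤ L) (hL_ne_top : L ≠ ∞) :
    Integrable (fun ω => f (G ω) ω) P := by
  refine ⟨?_, ?_⟩
  · exact (measurable_apply_of_measurableSet_fiber (fun i => hm _ (hG i)) hf).aestronglyMeasurable
  calc ∫⁻ ω, ‖f (G ω) ω‖ₑ ∂P = ∑' i, P {ω | G ω = i} * ∫⁻ ω, ‖f i ω‖ₑ ∂P :=
        lintegral_apply_index_eq_tsum_of_indep hm hG (fun i => (hf i).comap_le) hind
          fun i => measurable_enorm.comp (comap_measurable (f i))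
    _ ≤ ∑' i, P {ω | G ω = i} * L := ENNReal.tsum_le_tsum fun i => by gcongr; exact hL i
    _ = P Set.univ * L := by
        rw [ENNReal.tsum_mul_right, ← measure_iUnion (pairwise_disjoint_setOf_apply_eq G)
          (fun i => hm _ (hG i)), iUnion_setOf_apply_eq]
    _ < ∞ := ENNReal.mul_lt_top (measure_lt_top P _) hL_ne_top.lt_top

theorem integral_apply_index_eq_tsum_of_indep (hm : m ≤ mΩ)
    (hG : ∀ i, MeasurableSet[m] {ω | G ω = i}) (hf : ∀ i, Measurable (f i))
    (hind : ∀ i, Indep m (MeasurableSpace.comap (f i) inferInstance) P)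
    (hL : ∀ i, ∫⁻ ω, ‖f i ω‖ₑ ∂P ≤ L) (hL_ne_top : L ≠ ∞) :
    ∫ ω, f (G ω) ω ∂P = ∑' i, P.real {ω | G ω = i} * ∫ ω, f i ω ∂P := by
  calc ∫ ω, f (G ω) ω ∂P = ∑' i, ∫ ω in {ω | G ω = i}, f (G ω) ω ∂P := by
        rw [← integral_iUnion (fun i => hm _ (hG i)) (pairwise_disjoint_setOf_apply_eq G)
          (integrable_apply_index_of_indep hm hG hf hind hL hL_ne_top).integrableOn,
          iUnion_setOf_apply_eq, setIntegral_univ]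
    _ = ∑' i, ∫ ω in {ω | G ω = i}, f i ω ∂P := by
        congr with i
        exact setIntegral_congr_fun (hm _ (hG i)) fun ω (hω : G ω = i) => by rw [hω]
    _ = ∑' i, P.real {ω | G ω = i} * ∫ ω, f i ω ∂P := by
        congr with i
        exact (hind i).setIntegral_eq_mul (f := id) hm (hf i).aemeasurable (hG i)
          aestronglyMeasurable_id

theorem integral_apply_index_eq_integral_integral_of_indep [IsProbabilityMeasure P]
    (hm : m ≤ mΩ) (hG : ∀ i, MeasurableSet[m] {ω | G ω = i}) (hf : ∀ i, Measurable (f i))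
    (hind : ∀ i, Indep m (MeasurableSpace.comap (f i) inferInstance) P)
    (hL : ∀ i, ∫⁻ ω, ‖f i ω‖ₑ ∂P ≤ L) (hL_ne_top : L ≠ ∞) :
    ∫ ω, f (G ω) ω ∂P = ∫ ω, (∫ ω', f (G ω) ω' ∂P) ∂P := by
  -- the right side is the same sum for the constant family `i ↦ ∫ f i`
  have hconst := integral_apply_index_eq_tsum_of_indep (f := fun i _ => ∫ ω', f i ω' ∂P) hm hG
    (fun _ => measurable_const) (fun _ => by simpa using indep_bot_right (μ := P) m)
    (fun i => by simpa using (enorm_integral_le_lintegral_enorm _).trans (hL i)) hL_ne_top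
  rw [integral_apply_index_eq_tsum_of_indep hm hG hf hind hL hL_ne_top, hconst]
  simp

end RandomIndex

theorem indep_iSup_compl_range_sup {Ω κ ι : Type*} {mΩ : MeasurableSpace Ω} {P : Measure Ω}
    {m : κ → MeasurableSpace Ω} (h_le : ∀ k, m k ≤ mΩ) (h_ind : iIndep m P) (e : ι → κ)
    (i j : ι) : Indep (⨆ k ∈ (Set.range e)ᶜ, m k) (m (e i) ⊔ m (e j)) P := by
  have h := indep_iSup_of_disjoint h_le h_ind (S := (Set.range e)ᶜ) (T := {e i, e j})
    (Set.disjoint_compl_left_iff_subset.2 (Set.pair_subset ⟨i, rfl⟩ ⟨j, rfl⟩))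
  rwa [iSup_pair] at h

theorem measurableSet_setOf_mem_iff_mem {Ω : Type*} {m : MeasurableSpace Ω} {A B : Set Ω}
    (hA : MeasurableSet A) (hB : MeasurableSet B) : MeasurableSet {ω | ω ∈ A ↔ ω ∈ B} :=
  (hA.mem.iff hB.mem).setOf

theorem measureReal_setOf_mem_iff_mem {Ω : Type*} [MeasurableSpace Ω] {P : Measure Ω}
    [IsProbabilityMeasure P] {A B : Set Ω} (hA : MeasurableSet A) (hB : MeasurableSet B) :
    P.real {ω | ω ∈ A ↔ ω ∈ B} = 1 + 2 * P.real (A ∩ B) - P.real A - P.real B := by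
  have hsplit : {ω | ω ∈ A ↔ ω ∈ B} = A ∩ B ∪ (A ∪ B)ᶜ := by
    ext ω
    simp only [Set.mem_ofPred_eq, Set.mem_union, Set.mem_inter_iff, Set.mem_compl_iff]
    tauto
  have hdisj : Disjoint (A ∩ B) (A ∪ B)ᶜ :=
    Set.disjoint_compl_right_iff_subset.2 (Set.inter_subset_left.trans Set.subset_union_left)
  rw [hsplit, measureReal_union hdisj (hA.union hB).compl, measureReal_compl (hA.union hB),
    probReal_univ]
  linarith [measureReal_union_add_inter (μ := P) (s := A) hB]

theorem lintegral_enorm_le_ofReal_integral {Ω : Type*} [MeasurableSpace Ω] {P : Measure Ω}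
    {f g : Ω → ℝ} (hg : Integrable g P) (hfg : ∀ ω, ‖f ω‖ ≤ g ω) :
    ∫⁻ ω, ‖f ω‖ₑ ∂P ≤ ENNReal.ofReal (∫ ω, g ω ∂P) := by
  rw [ofReal_integral_eq_lintegral_ofReal hg
    (Filter.Eventually.of_forall fun ω => (norm_nonneg _).trans (hfg ω))]
  exact lintegral_mono fun ω => (ofReal_norm (f ω)).symm.le.trans
    (ENNReal.ofReal_le_ofReal (hfg ω))

theorem integral_mul_eq_ite {Ω ι : Type*} [MeasurableSpace Ω] {P : Measure Ω} [DecidableEq ι]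
    {U : ι → Ω → ℝ} (hU : ∀ i, Measurable (U i))
    (h_indep : Pairwise fun i j => IndepFun (U i) (U j) P)
    {m m2 : ℝ} (hm : ∀ i, ∫ ω, U i ω ∂P = m) (hm2 : ∀ i, ∫ ω, U i ω ^ 2 ∂P = m2) (i j : ι) :
    ∫ ω, U i ω * U j ω ∂P = if i = j then m2 else m ^ 2 := by
  split_ifs with hij
  · simpa [hij, sq] using hm2 j
  · have h := (h_indep hij).integral_mul_eq_mul_integral (hU i).aestronglyMeasurable
      (hU j).aestronglyMeasurable
    simpa only [Pi.mul_apply, hm, sq] using h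

theorem integral_ite_eq_add_mul_measureReal {Ω : Type*} [MeasurableSpace Ω] {P : Measure Ω}
    [IsProbabilityMeasure P] {p : Ω → Prop} [DecidablePred p] (hp : MeasurableSet {ω | p ω})
    (a b : ℝ) : ∫ ω, (if p ω then a else b) ∂P = b + (a - b) * P.real {ω | p ω} := by
  have h : (fun ω => if p ω then a else b)
      = fun ω => b + {ω | p ω}.indicator (fun _ => a - b) ω := by
    ext ω
    by_cases hω : p ω <;> simp [hω]
  rw [h, integral_add (integrable_const b) ((integrable_const _).indicator hp), integral_const,
    integral_indicator_const _ hp]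
  simp [mul_comm]

section MosaicModel

variable {Ω : Type*} {N : Ω → ℕ} {Ex Ey : ℕ → Set Ω} {U : Finset ℕ → Ω → ℝ}

/-- The cell of the mosaic containing the point `x` is `C_I` for `I = cellIndex N E ω`, where
`E i = {x ∈ B_i}`. -/
noncomputable def cellIndex (N : Ω → ℕ) (E : ℕ → Set Ω) (ω : Ω) : Finset ℕ :=
  (Icc 1 (N ω)).filter (fun i => ω ∈ E i)

theorem measurableSet_cellIndex_eq {m : MeasurableSpace Ω} {E : ℕ → Set Ω}
    (hN : ∀ n, MeasurableSet {ω | N ω = n}) (hE : ∀ i, MeasurableSet (E i)) (I : Finset ℕ) :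
    MeasurableSet {ω | cellIndex N E ω = I} := by
  have h : {ω | cellIndex N E ω = I}
      = ⋃ n, {ω | N ω = n} ∩ {ω | ∀ i, (i ∈ Icc 1 n ∧ ω ∈ E i) ↔ i ∈ I} := by
    ext ω
    simp [cellIndex, Finset.ext_iff]
  rw [h]
  exact .iUnion fun n => (hN n).inter (Measurable.forall fun i =>
    (measurable_const.and (hE i).mem).iff measurable_const).setOf

theorem setOf_cellIndex_eq_cellIndex :
    {ω | cellIndex N Ex ω = cellIndex N Ey ω}
      = ⋃ n, {ω | N ω = n} ∩ ⋂ i ∈ Icc 1 n, {ω | ω ∈ Ex i ↔ ω ∈ Ey i} := by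
  ext ω
  simp [cellIndex, filter_inj']

abbrev mosaicSigma (N : Ω → ℕ) (Ex Ey : ℕ → Set Ω) (U : Finset ℕ → Ω → ℝ) :
    Unit ⊕ ℕ ⊕ Finset ℕ → MeasurableSpace Ω :=
  Sum.elim (fun _ => MeasurableSpace.comap N ⊤)
    (Sum.elim (fun i => MeasurableSpace.generateFrom {Ex i, Ey i})
      (fun I => MeasurableSpace.comap (U I) (borel ℝ)))

abbrev cellSigma (N : Ω → ℕ) (Ex Ey : ℕ → Set Ω) : MeasurableSpace Ω :=
  MeasurableSpace.comap N ⊤ ⊔ ⨆ i, MeasurableSpace.generateFrom {Ex i, Ey i}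

theorem cellSigma_le_iSup_compl_range :
    cellSigma N Ex Ey ≤ ⨆ k ∈ (Set.range (Sum.inr ∘ Sum.inr))ᶜ, mosaicSigma N Ex Ey U k :=
  sup_le (le_biSup (mosaicSigma N Ex Ey U) (i := Sum.inl ()) (by simp))
    (iSup_le fun i => le_biSup (mosaicSigma N Ex Ey U) (i := Sum.inr (Sum.inl i)) (by simp))

theorem measurableSet_cellSigma_cellIndex_eq (p : Finset ℕ × Finset ℕ) :
    MeasurableSet[cellSigma N Ex Ey] {ω | (cellIndex N Ex ω, cellIndex N Ey ω) = p} := by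
  have hN : ∀ n, MeasurableSet[cellSigma N Ex Ey] {ω | N ω = n} :=
    fun n => le_sup_left (a := MeasurableSpace.comap N ⊤) _ ⟨{n}, trivial, rfl⟩
  have hB : ∀ i, MeasurableSpace.generateFrom {Ex i, Ey i} ≤ cellSigma N Ex Ey :=
    fun i => (le_iSup (fun i => MeasurableSpace.generateFrom {Ex i, Ey i}) i).trans le_sup_right
  simp only [Prod.ext_iff]
  exact (measurableSet_cellIndex_eq hN
      (fun i => hB i _ (MeasurableSpace.measurableSet_generateFrom (by simp))) p.1).inter
    (measurableSet_cellIndex_eq hN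
      (fun i => hB i _ (MeasurableSpace.measurableSet_generateFrom (by simp))) p.2)

variable [mΩ : MeasurableSpace Ω] {P : Measure Ω}

theorem mosaicSigma_le (hN : Measurable N) (hmx : ∀ i, MeasurableSet (Ex i))
    (hmy : ∀ i, MeasurableSet (Ey i)) (hU : ∀ I, Measurable (U I)) (k : Unit ⊕ ℕ ⊕ Finset ℕ) :
    mosaicSigma N Ex Ey U k ≤ mΩ := by
  rcases k with _ | i | I
  · exact hN.comap_le
  · exact MeasurableSpace.generateFrom_le (by rintro t (rfl | rfl); exacts [hmx i, hmy i])
  · exact (hU I).comap_le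

theorem integral_comp_cellIndex [IsProbabilityMeasure P] (hN : Measurable N)
    (hmx : ∀ i, MeasurableSet (Ex i)) (hmy : ∀ i, MeasurableSet (Ey i))
    (hU : ∀ I, Measurable (U I)) (hind : iIndep (mosaicSigma N Ex Ey U) P)
    (hUint : ∀ I, Integrable (fun ω => U I ω ^ 2) P) {m2 : ℝ}
    (hm2 : ∀ I, ∫ ω, U I ω ^ 2 ∂P = m2) {g : ℝ → ℝ → ℝ} (hg : Measurable (Function.uncurry g))
    (hg_le : ∀ x y, ‖g x y‖ ≤ 1 + x ^ 2 + y ^ 2) :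
    ∫ ω, g (U (cellIndex N Ex ω) ω) (U (cellIndex N Ey ω) ω) ∂P
      = ∫ ω, (∫ ω', g (U (cellIndex N Ex ω) ω') (U (cellIndex N Ey ω) ω') ∂P) ∂P := by
  have hle := mosaicSigma_le hN hmx hmy hU
  have hgU : ∀ I J, Measurable[MeasurableSpace.comap (U I) (borel ℝ) ⊔
      MeasurableSpace.comap (U J) (borel ℝ)] fun ω => g (U I ω) (U J ω) := fun I J =>
    hg.comp (((comap_measurable (U I)).mono le_sup_left le_rfl).prodMk
      ((comap_measurable (U J)).mono le_sup_right le_rfl))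
  refine integral_apply_index_eq_integral_integral_of_indep
    (G := fun ω => (cellIndex N Ex ω, cellIndex N Ey ω)) (f := fun p ω => g (U p.1 ω) (U p.2 ω))
    (L := ENNReal.ofReal (1 + 2 * m2))
    (cellSigma_le_iSup_compl_range.trans (iSup₂_le fun k _ => hle k))
    measurableSet_cellSigma_cellIndex_eq
    (fun p => (hgU p.1 p.2).mono (sup_le (hU p.1).comap_le (hU p.2).comap_le) le_rfl)
    (fun p => indep_of_indep_of_le_right
      (indep_of_indep_of_le_left (indep_iSup_compl_range_sup hle hind _ p.1 p.2)
        cellSigma_le_iSup_compl_range) (hgU p.1 p.2).comap_le)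
    (fun p => ?_) ENNReal.ofReal_ne_top
  -- the growth bound on `g` turns the common second moment into a uniform `L¹` bound
  have h1 : Integrable (fun ω => 1 + U p.1 ω ^ 2) P := (integrable_const 1).add (hUint p.1)
  calc ∫⁻ ω, ‖g (U p.1 ω) (U p.2 ω)‖ₑ ∂P
      ≤ ENNReal.ofReal (∫ ω, 1 + U p.1 ω ^ 2 + U p.2 ω ^ 2 ∂P) :=
        lintegral_enorm_le_ofReal_integral (h1.add (hUint p.2)) fun ω => hg_le _ _
    _ = ENNReal.ofReal (1 + 2 * m2) := by
        rw [integral_add h1 (hUint p.2), integral_add (integrable_const 1) (hUint p.1), hm2, hm2]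
        simp only [integral_const, probReal_univ, smul_eq_mul, one_mul]
        ring_nf

theorem measure_setOf_eq_inter_biInter_agree (hind : iIndep (mosaicSigma N Ex Ey U) P) (n : ℕ) :
    P ({ω | N ω = n} ∩ ⋂ i ∈ Icc 1 n, {ω | ω ∈ Ex i ↔ ω ∈ Ey i})
      = P {ω | N ω = n} * ∏ i ∈ Icc 1 n, P {ω | ω ∈ Ex i ↔ ω ∈ Ey i} := by
  let s : Unit ⊕ ℕ ⊕ Finset ℕ → Set Ω := Sum.elim (fun _ => {ω | N ω = n})
    (Sum.elim (fun i => {ω | ω ∈ Ex i ↔ ω ∈ Ey i}) fun _ => Set.univ)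
  have h := hind.meas_biInter (s := s)
    (S := insert (Sum.inl ()) ((Icc 1 n).image (Sum.inr ∘ Sum.inl))) ?_
  · simpa [s, Finset.set_biInter_insert, Finset.prod_insert, Finset.set_biInter_finset_image,
      Finset.prod_image] using h
  rintro (_ | i | I) -
  · exact ⟨{n}, trivial, rfl⟩
  · exact measurableSet_setOf_mem_iff_mem (MeasurableSpace.measurableSet_generateFrom (by simp))
      (MeasurableSpace.measurableSet_generateFrom (by simp))
  · exact MeasurableSet.univ

theorem measurableSet_setOf_eq_inter_biInter_agree (hN : Measurable N)
    (hmx : ∀ i, MeasurableSet (Ex i)) (hmy : ∀ i, MeasurableSet (Ey i)) (n : ℕ) :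
    MeasurableSet ({ω | N ω = n} ∩ ⋂ i ∈ Icc 1 n, {ω | ω ∈ Ex i ↔ ω ∈ Ey i}) :=
  (hN (measurableSet_singleton n)).inter
    (Finset.measurableSet_biInter _ fun i _ => measurableSet_setOf_mem_iff_mem (hmx i) (hmy i))

theorem measurableSet_setOf_cellIndex_eq_cellIndex (hN : Measurable N)
    (hmx : ∀ i, MeasurableSet (Ex i)) (hmy : ∀ i, MeasurableSet (Ey i)) :
    MeasurableSet {ω | cellIndex N Ex ω = cellIndex N Ey ω} := by
  rw [setOf_cellIndex_eq_cellIndex]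
  exact .iUnion (measurableSet_setOf_eq_inter_biInter_agree hN hmx hmy)

theorem measureReal_setOf_cellIndex_eq_cellIndex [IsProbabilityMeasure P] (hN : Measurable N)
    (hmx : ∀ i, MeasurableSet (Ex i)) (hmy : ∀ i, MeasurableSet (Ey i))
    (hind : iIndep (mosaicSigma N Ex Ey U) P) {t : ℝ}
    (ht : ∀ i, P.real {ω | ω ∈ Ex i ↔ ω ∈ Ey i} = t) :
    P.real {ω | cellIndex N Ex ω = cellIndex N Ey ω} = ∑' n, P.real {ω | N ω = n} * t ^ n := by
  have hdisj : Pairwise (Function.onFun Disjoint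
      fun n => {ω | N ω = n} ∩ ⋂ i ∈ Icc 1 n, {ω | ω ∈ Ex i ↔ ω ∈ Ey i}) :=
    (pairwise_disjoint_setOf_apply_eq N).mono fun _ _ h =>
      h.mono Set.inter_subset_left Set.inter_subset_left
  rw [setOf_cellIndex_eq_cellIndex, measureReal_def,
    measure_iUnion hdisj (measurableSet_setOf_eq_inter_biInter_agree hN hmx hmy),
    ENNReal.tsum_toReal_eq fun _ => measure_ne_top _ _]
  congr with n
  rw [measure_setOf_eq_inter_biInter_agree hind, ENNReal.toReal_mul, ENNReal.toReal_prod]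
  simp [← measureReal_def, ht]

end MosaicModel

theorem stmt8_general {Ω : Type*} [MeasurableSpace Ω] (P : Measure Ω) [IsProbabilityMeasure P]
    (N : Ω → ℕ) (hN : Measurable N)
    (Ex Ey : ℕ → Set Ω) (hmx : ∀ i, MeasurableSet (Ex i)) (hmy : ∀ i, MeasurableSet (Ey i))
    (U : Finset ℕ → Ω → ℝ) (hU : ∀ I, Measurable (U I))
    (hUint : ∀ I, Integrable (fun ω => (U I ω) ^ 2) P)
    (m m2 : ℝ) (hm : ∀ I, ∫ ω, U I ω ∂P = m) (hm2 : ∀ I, ∫ ω, (U I ω) ^ 2 ∂P = m2)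
    (hind : iIndep
      (Sum.elim (fun _ : Unit => MeasurableSpace.comap N ⊤)
        (Sum.elim (fun i : ℕ => MeasurableSpace.generateFrom {Ex i, Ey i})
          (fun I : Finset ℕ => MeasurableSpace.comap (U I) (borel ℝ)))) P)
    (px py pxy : ℝ)
    (hpx : ∀ i, (P (Ex i)).toReal = px) (hpy : ∀ i, (P (Ey i)).toReal = py)
    (hpxy : ∀ i, (P (Ex i ∩ Ey i)).toReal = pxy) :
    let Z : (ℕ → Set Ω) → Ω → ℝ :=
      fun E ω => U ((Finset.Icc 1 (N ω)).filter (fun i => ω ∈ E i)) ω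
    let ψ : ℝ → ℝ := fun t => ∑' n : ℕ, (P {ω | N ω = n}).toReal * t ^ n
    (∫ ω, Z Ex ω ∂P = m) ∧
    (∫ ω, Z Ex ω * Z Ey ω ∂P =
      (m2 - m ^ 2) * ψ (1 + 2 * pxy - px - py) + m ^ 2) ∧
    (∫ ω, (Z Ex ω) ^ 2 ∂P - (∫ ω, Z Ex ω ∂P) ^ 2 = m2 - m ^ 2) := by
  intro Z ψ
  have hpair : Pairwise fun I J => IndepFun (U I) (U J) P := fun I J hIJ =>
    (IndepFun_iff_Indep _ _ _).2
      (hind.indep (i := Sum.inr (Sum.inr I)) (j := Sum.inr (Sum.inr J)) (by simpa using hIJ))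
  have ht : ∀ i, P.real {ω | ω ∈ Ex i ↔ ω ∈ Ey i} = 1 + 2 * pxy - px - py := fun i => by
    simp only [measureReal_setOf_mem_iff_mem (hmx i) (hmy i), measureReal_def, hpx, hpy, hpxy]
  have hmean : ∫ ω, Z Ex ω ∂P = m := by
    refine (integral_comp_cellIndex (g := fun x _ => x) hN hmx hmy hU hind hUint hm2
      measurable_fst fun x y => ?_).trans ?_
    · nlinarith [sq_nonneg (|x| - 1), sq_abs x, sq_nonneg y, Real.norm_eq_abs x]
    · simp [hm]
  have hsq : ∫ ω, Z Ex ω ^ 2 ∂P = m2 := by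
    refine (integral_comp_cellIndex (g := fun x _ => x ^ 2) hN hmx hmy hU hind hUint hm2
      (measurable_fst.pow_const 2) fun x y => ?_).trans ?_
    · simp only [norm_pow, Real.norm_eq_abs, sq_abs]
      nlinarith [sq_nonneg y]
    · simp [hm2]
  have hcross :
      ∫ ω, Z Ex ω * Z Ey ω ∂P = m ^ 2 + (m2 - m ^ 2) * ψ (1 + 2 * pxy - px - py) := by
    refine (integral_comp_cellIndex (g := (· * ·)) hN hmx hmy hU hind hUint hm2
      measurable_mul fun x y => ?_).trans ?_
    · simp only [norm_mul, Real.norm_eq_abs]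
      nlinarith [sq_nonneg (|x| - |y|), sq_abs x, sq_abs y, abs_nonneg x, abs_nonneg y]
    · simp only [integral_mul_eq_ite hU hpair hm hm2]
      rw [integral_ite_eq_add_mul_measureReal
          (measurableSet_setOf_cellIndex_eq_cellIndex hN hmx hmy),
        measureReal_setOf_cellIndex_eq_cellIndex hN hmx hmy hind ht]
      rfl
  exact ⟨hmean, by rw [hcross]; ring, by rw [hsq, hmean]⟩

/-- Simple mosaic random field `Z_M(x) = ∑_{I⊆{1,…,N}} U_I 1_{x∈C_I}`: the cells are built from
i.i.d. random sets `B_i` (with `Ex i = {x ∈ B_i}`, `Ey i = {y ∈ B_i}`), the values `U_I` are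
i.i.d. with mean `m` and second moment `m2` (`Var U = m2 - m² > 0`), `N` is `ℕ`-valued, not a.s.
`0`, and `N`, the `B_i` and the `U_I` are jointly independent.  Then `E[Z_M(x)] = EU`,
`E[Z_M(x)Z_M(y)] = Var(U)·ψ_N(1+2p_{xy}-p_x-p_y) + (EU)²`, and `Var(Z_M(x)) = Var(U)`;
hence the correlation of `Z_M(x)` and `Z_M(y)` is `ψ_N(1+2p_{xy}-p_x-p_y)`. -/
theorem stmt8 {Ω : Type*} [MeasurableSpace Ω] (P : Measure Ω) [IsProbabilityMeasure P]
    (N : Ω → ℕ) (hN : Measurable N) (hN0 : P {ω | N ω = 0} < 1)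
    (Ex Ey : ℕ → Set Ω) (hmx : ∀ i, MeasurableSet (Ex i)) (hmy : ∀ i, MeasurableSet (Ey i))
    (U : Finset ℕ → Ω → ℝ) (hU : ∀ I, Measurable (U I))
    (hUid : ∀ I J, Measure.map (U I) P = Measure.map (U J) P)
    (hUint : ∀ I, Integrable (fun ω => (U I ω) ^ 2) P)
    (m m2 : ℝ) (hm : ∀ I, ∫ ω, U I ω ∂P = m) (hm2 : ∀ I, ∫ ω, (U I ω) ^ 2 ∂P = m2)
    (hvar : 0 < m2 - m ^ 2)
    (hind : iIndep
      (Sum.elim (fun _ : Unit => MeasurableSpace.comap N ⊤)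
        (Sum.elim (fun i : ℕ => MeasurableSpace.generateFrom {Ex i, Ey i})
          (fun I : Finset ℕ => MeasurableSpace.comap (U I) (borel ℝ)))) P)
    (px py pxy : ℝ) (hpx0 : 0 < px) (hpy0 : 0 < py)
    (hpx : ∀ i, (P (Ex i)).toReal = px) (hpy : ∀ i, (P (Ey i)).toReal = py)
    (hpxy : ∀ i, (P (Ex i ∩ Ey i)).toReal = pxy) :
    let Z : (ℕ → Set Ω) → Ω → ℝ :=
      fun E ω => U ((Finset.Icc 1 (N ω)).filter (fun i => ω ∈ E i)) ω
    let ψ : ℝ → ℝ := fun t => ∑' n : ℕ, (P {ω | N ω = n}).toReal * t ^ n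
    (∫ ω, Z Ex ω ∂P = m) ∧
    (∫ ω, Z Ex ω * Z Ey ω ∂P =
      (m2 - m ^ 2) * ψ (1 + 2 * pxy - px - py) + m ^ 2) ∧
    (∫ ω, (Z Ex ω) ^ 2 ∂P - (∫ ω, Z Ex ω ∂P) ^ 2 = m2 - m ^ 2) :=
  stmt8_general P N hN Ex Ey hmx hmy U hU hUint m m2 hm hm2 hind px py pxy hpx hpy hpxy
end

section
/- Under the random token model, E[Z_{RT}(x)] = EU·EN·p_x and Cov(Z_{RT}(x), Z_{RT}(y)) = E[U²]·EN·p_{xy} + (EU)²·(Var N - EN)·p_x·p_y. Consequently the correlation is (a·p_{xy} + b·p_x·p_y)/√((a + b·p_x)(a + b·p_y)·p_x·p_y) with a = E[U²]·EN and b = (EU)²·(Var N - EN). -/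
/-!
Condition on the token count: `{N = n}` is independent of the tokens, so each moment of `Z` is
`∑ₙ P(N = n)` times the same moment of the sum `Zₙ` of the first `n` tokens. In
`E[Zₙ(x) Zₙ(y)] = ∑ᵢ ∑ⱼ E[1_{x∈Bᵢ} Uᵢ 1_{y∈Bⱼ} Uⱼ]` the `n` diagonal terms are `E[U²] p_{xy}` and,
by independence of distinct tokens, the `n² - n` others are `(EU)² p_x p_y`; averaging over `N`
turns `n` and `n² - n` into `EN` and `E[N²] - EN`. The bound `|Zₙ(x) Zₙ(y)| ≤ n ∑ᵢ Uᵢ²`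
together with `E N² < ∞` makes all of this integrable.
-/

open MeasureTheory ProbabilityTheory Finset
open scoped Classical

namespace ProbabilityTheory

variable {Ω ι : Type*} {m mΩ : MeasurableSpace Ω} {P : Measure Ω}

lemma iIndep.indepFun_of_measurable_biSup {β γ : Type*} [MeasurableSpace β] [MeasurableSpace γ]
    {M : ι → MeasurableSpace Ω} (hle : ∀ k, M k ≤ mΩ) (hind : iIndep M P)
    {s t : Set ι} (hst : Disjoint s t) {f : Ω → β} {g : Ω → γ}
    (hf : Measurable[⨆ k ∈ s, M k] f) (hg : Measurable[⨆ k ∈ t, M k] g) : IndepFun f g P :=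
  (IndepFun_iff_Indep f g P).2 <| indep_of_indep_of_le_right
    (indep_of_indep_of_le_left (indep_iSup_of_disjoint hle hind hst) hf.comap_le) hg.comap_le

lemma integrable_of_integrable_sq [IsFiniteMeasure P] {f : Ω → ℝ}
    (hf : AEStronglyMeasurable f P) (hf2 : Integrable (fun ω => f ω ^ 2) P) : Integrable f P :=
  ((memLp_two_iff_integrable_sq hf).2 hf2).integrable one_le_two

section RandomIndex

variable {N : Ω → ℕ} {F : ℕ → Ω → ℝ}

lemma setIntegral_preimage_eq_measureReal_mul (hN : Measurable N) (hm : m ≤ mΩ)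
    (hind : Indep (MeasurableSpace.comap N ⊤) m P) (n : ℕ) {f : Ω → ℝ} (hf : Measurable[m] f) :
    ∫ ω in N ⁻¹' {n}, f ω ∂P = P.real (N ⁻¹' {n}) * ∫ ω, f ω ∂P :=
  Indep.setIntegral_eq_mul (X := f) (f := id) hN.comap_le
    (indep_of_indep_of_le_right hind hf.comap_le) (hf.mono hm le_rfl).aemeasurable
    (measurableSet_preimage (comap_measurable N) trivial) aestronglyMeasurable_id

lemma integrable_comp_of_indep (hN : Measurable N) (hm : m ≤ mΩ)
    (hind : Indep (MeasurableSpace.comap N ⊤) m P) (hF : ∀ n, Measurable[m] (F n))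
    (hFint : ∀ n, Integrable (F n) P)
    (hsum : Summable fun n => P.real (N ⁻¹' {n}) * ∫ ω, ‖F n ω‖ ∂P) :
    Integrable (fun ω => F (N ω) ω) P := by
  have hfiber (n : ℕ) : Set.EqOn (fun ω => F (N ω) ω) (F n) (N ⁻¹' {n}) :=
    fun ω hω => congrArg (F · ω) hω
  have hon (n : ℕ) : IntegrableOn (fun ω => F (N ω) ω) (N ⁻¹' {n}) P :=
    (integrableOn_congr_fun (hfiber n) (hN (measurableSet_singleton n))).2 (hFint n).integrableOn
  have h := integrableOn_iUnion_of_summable_integral_norm hon <| by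
    refine hsum.congr fun n => ?_
    rw [setIntegral_congr_fun (hN (measurableSet_singleton n)) fun ω hω => congrArg (‖F · ω‖) hω,
      setIntegral_preimage_eq_measureReal_mul (f := fun ω => ‖F n ω‖) hN hm hind n
        (measurable_norm.comp (hF n))]
  rwa [← Set.preimage_iUnion, Set.iUnion_of_singleton, Set.preimage_univ, integrableOn_univ] at h

lemma hasSum_integral_comp_of_indep (hN : Measurable N) (hm : m ≤ mΩ)
    (hind : Indep (MeasurableSpace.comap N ⊤) m P) (hF : ∀ n, Measurable[m] (F n))
    (hint : Integrable (fun ω => F (N ω) ω) P) :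
    HasSum (fun n => P.real (N ⁻¹' {n}) * ∫ ω, F n ω ∂P) (∫ ω, F (N ω) ω ∂P) := by
  have h := hasSum_integral_iUnion (fun n => hN (measurableSet_singleton n))
    (pairwise_disjoint_fiber N) hint.integrableOn
  rw [← Set.preimage_iUnion, Set.iUnion_of_singleton, Set.preimage_univ, setIntegral_univ] at h
  refine h.congr_fun fun n => ?_
  rw [setIntegral_congr_fun (hN (measurableSet_singleton n)) fun ω hω => congrArg (F · ω) hω,
    setIntegral_preimage_eq_measureReal_mul hN hm hind n (hF n)]

lemma hasSum_integral_comp_nat [IsProbabilityMeasure P] (hN : Measurable N) {g : ℕ → ℝ}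
    (hg : Integrable (fun ω => g (N ω)) P) :
    HasSum (fun n => P.real (N ⁻¹' {n}) * g n) (∫ ω, g (N ω) ∂P) := by
  simpa using hasSum_integral_comp_of_indep (m := ⊥) (F := fun n _ => g n) hN bot_le
    (indep_bot_right _) (fun _ => measurable_const) hg

lemma hasSum_integral_natCast [IsProbabilityMeasure P] (hN : Measurable N)
    (hN2 : Integrable (fun ω => (N ω : ℝ) ^ 2) P) :
    HasSum (fun n => P.real (N ⁻¹' {n}) * n) (∫ ω, (N ω : ℝ) ∂P) :=
  hasSum_integral_comp_nat hN <|
    integrable_of_integrable_sq (measurable_from_top.comp hN).aestronglyMeasurable hN2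

end RandomIndex

end ProbabilityTheory

lemma Finset.sum_sum_ite_eq_diag {α R : Type*} [DecidableEq α] [CommRing R] (s : Finset α)
    (a b : R) :
    ∑ i ∈ s, ∑ j ∈ s, (if i = j then a else b) = #s * a + ((#s : R) ^ 2 - #s) * b := by
  have hsplit (i j : α) : (if i = j then a else b) = b + if i = j then a - b else 0 := by
    split_ifs <;> ring
  simp only [hsplit, sum_add_distrib, sum_const, sum_ite_eq, nsmul_eq_mul]
  rw [sum_congr rfl fun i hi => if_pos hi, sum_const, nsmul_eq_mul]
  ring

namespace RandomToken

variable {Ω : Type*} {mΩ : MeasurableSpace Ω} {P : Measure Ω} {N : Ω → ℕ}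
  {mB : ℕ → MeasurableSpace Ω} {U : ℕ → Ω → ℝ} {E E' : ℕ → Set Ω} {m m2 : ℝ}

/-- The `i`-th random set enters through a σ-algebra `mB i` in which the events `{x ∈ Bᵢ}` are
measurable. -/
abbrev sigmaAlgebra (N : Ω → ℕ) (mB : ℕ → MeasurableSpace Ω) (U : ℕ → Ω → ℝ) :
    Unit ⊕ ℕ ⊕ ℕ → MeasurableSpace Ω :=
  Sum.elim (fun _ => MeasurableSpace.comap N ⊤)
    (Sum.elim mB fun i => MeasurableSpace.comap (U i) (borel ℝ))

structure IsModel (P : Measure Ω) (N : Ω → ℕ) (mB : ℕ → MeasurableSpace Ω) (U : ℕ → Ω → ℝ)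
    (m m2 : ℝ) : Prop where
  sigmaAlgebra_le : ∀ k, sigmaAlgebra N mB U k ≤ mΩ
  iIndep : iIndep (sigmaAlgebra N mB U) P
  memLp_two : ∀ i, MemLp (U i) 2 P
  integral_eq : ∀ i, ∫ ω, U i ω ∂P = m
  integral_sq_eq : ∀ i, ∫ ω, U i ω ^ 2 ∂P = m2

/-- `Z_{RT}(x)(ω) = partialSum E U (N ω) ω` with `E i = {x ∈ Bᵢ}`. -/
noncomputable def partialSum (E : ℕ → Set Ω) (U : ℕ → Ω → ℝ) (n : ℕ) (ω : Ω) : ℝ :=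
  ∑ i ∈ Icc 1 n, (E i).indicator (U i) ω

lemma measurable_indicator_biSup {s : Set (Unit ⊕ ℕ ⊕ ℕ)} {i : ℕ} (hs : .inr (.inl i) ∈ s)
    (hs' : .inr (.inr i) ∈ s) (hE : MeasurableSet[mB i] (E i)) :
    Measurable[⨆ k ∈ s, sigmaAlgebra N mB U k] ((E i).indicator (U i)) :=
  ((comap_measurable (U i)).mono (le_biSup (sigmaAlgebra N mB U) hs') le_rfl).indicator
    (le_biSup (sigmaAlgebra N mB U) hs _ hE)

lemma measurable_partialSum (hE : ∀ i, MeasurableSet[mB i] (E i)) (n : ℕ) :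
    Measurable[⨆ k ∈ Set.range Sum.inr, sigmaAlgebra N mB U k] (partialSum E U n) :=
  Finset.measurable_sum _ fun i _ =>
    measurable_indicator_biSup ⟨.inl i, rfl⟩ ⟨.inr i, rfl⟩ (hE i)

lemma sq_partialSum_le (E : ℕ → Set Ω) (U : ℕ → Ω → ℝ) (n : ℕ) (ω : Ω) :
    partialSum E U n ω ^ 2 ≤ n * ∑ i ∈ Icc 1 n, U i ω ^ 2 := by
  calc partialSum E U n ω ^ 2 ≤ #(Icc 1 n) * ∑ i ∈ Icc 1 n, (E i).indicator (U i) ω ^ 2 :=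
        sq_sum_le_card_mul_sum_sq
    _ ≤ n * ∑ i ∈ Icc 1 n, U i ω ^ 2 := by
        rw [Nat.card_Icc, Nat.add_sub_cancel]
        refine mul_le_mul_of_nonneg_left (sum_le_sum fun i _ => ?_) n.cast_nonneg
        by_cases hω : ω ∈ E i
        · simp [hω]
        · simpa [hω] using sq_nonneg (U i ω)

namespace IsModel

lemma of_measurable (hN : Measurable N) (hmB : ∀ i, mB i ≤ mΩ) (hU : ∀ i, Measurable (U i))
    (hind : ProbabilityTheory.iIndep (sigmaAlgebra N mB U) P)
    (hU2 : ∀ i, Integrable (fun ω => U i ω ^ 2) P)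
    (hm : ∀ i, ∫ ω, U i ω ∂P = m) (hm2 : ∀ i, ∫ ω, U i ω ^ 2 ∂P = m2) :
    IsModel P N mB U m m2 where
  sigmaAlgebra_le
    | .inl _ => hN.comap_le
    | .inr (.inl i) => hmB i
    | .inr (.inr i) => (hU i).comap_le
  iIndep := hind
  memLp_two i := (memLp_two_iff_integrable_sq (hU i).aestronglyMeasurable).2 (hU2 i)
  integral_eq := hm
  integral_sq_eq := hm2

lemma measurable_count (h : IsModel P N mB U m m2) : Measurable N :=
  measurable_iff_comap_le.2 (h.sigmaAlgebra_le (.inl ()))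

lemma measurable_weight (h : IsModel P N mB U m m2) (i : ℕ) : Measurable (U i) :=
  measurable_iff_comap_le.2 (h.sigmaAlgebra_le (.inr (.inr i)))

lemma measurableSet (h : IsModel P N mB U m m2) {i : ℕ} {s : Set Ω}
    (hs : MeasurableSet[mB i] s) : MeasurableSet s :=
  h.sigmaAlgebra_le (.inr (.inl i)) s hs

lemma memLp_indicator (h : IsModel P N mB U m m2) {i : ℕ} (hE : MeasurableSet[mB i] (E i)) :
    MemLp ((E i).indicator (U i)) 2 P :=
  (h.memLp_two i).indicator (h.measurableSet hE)

lemma indep_count (h : IsModel P N mB U m m2) :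
    Indep (MeasurableSpace.comap N ⊤) (⨆ k ∈ Set.range Sum.inr, sigmaAlgebra N mB U k) P := by
  have hdisj : Disjoint ({.inl ()} : Set (Unit ⊕ ℕ ⊕ ℕ)) (Set.range Sum.inr) :=
    Set.disjoint_singleton_left.2 (by simp)
  have h1 := indep_iSup_of_disjoint h.sigmaAlgebra_le h.iIndep hdisj
  have h2 : MeasurableSpace.comap N ⊤ ≤
      ⨆ k ∈ ({.inl ()} : Set (Unit ⊕ ℕ ⊕ ℕ)), sigmaAlgebra N mB U k :=
    le_biSup (sigmaAlgebra N mB U) (Set.mem_singleton (Sum.inl ()))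
  exact indep_of_indep_of_le_left h1 h2

lemma memLp_partialSum (h : IsModel P N mB U m m2) (hE : ∀ i, MeasurableSet[mB i] (E i))
    (n : ℕ) : MemLp (partialSum E U n) 2 P :=
  memLp_finsetSum _ fun i _ => h.memLp_indicator (hE i)

lemma integral_indicator (h : IsModel P N mB U m m2) {i : ℕ} (hE : MeasurableSet[mB i] (E i)) :
    ∫ ω, (E i).indicator (U i) ω ∂P = P.real (E i) * m := by
  rw [MeasureTheory.integral_indicator (h.measurableSet hE), ← h.integral_eq i]
  exact (h.iIndep.indep (i := .inr (.inl i)) (j := .inr (.inr i)) (by simp)).setIntegral_eq_mul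
    (f := id) (h.sigmaAlgebra_le _) (h.measurable_weight i).aemeasurable hE aestronglyMeasurable_id

lemma integral_indicator_mul_indicator_self (h : IsModel P N mB U m m2) {i : ℕ}
    (hE : MeasurableSet[mB i] (E i)) (hE' : MeasurableSet[mB i] (E' i)) :
    ∫ ω, (E i).indicator (U i) ω * (E' i).indicator (U i) ω ∂P = P.real (E i ∩ E' i) * m2 := by
  have hEE' : MeasurableSet[mB i] (E i ∩ E' i) := hE.inter hE'
  simp_rw [← Set.inter_indicator_mul, ← sq]
  rw [MeasureTheory.integral_indicator (h.measurableSet hEE'), ← h.integral_sq_eq i]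
  exact (h.iIndep.indep (i := .inr (.inl i)) (j := .inr (.inr i)) (by simp)).setIntegral_eq_mul
    (f := (· ^ 2)) (h.sigmaAlgebra_le _) (h.measurable_weight i).aemeasurable hEE'
    (measurable_id.pow_const 2).aestronglyMeasurable

lemma indepFun_indicator (h : IsModel P N mB U m m2) {i j : ℕ} (hij : i ≠ j)
    (hE : MeasurableSet[mB i] (E i)) (hE' : MeasurableSet[mB j] (E' j)) :
    IndepFun ((E i).indicator (U i)) ((E' j).indicator (U j)) P :=
  h.iIndep.indepFun_of_measurable_biSup h.sigmaAlgebra_le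
    (s := {.inr (.inl i), .inr (.inr i)}) (t := {.inr (.inl j), .inr (.inr j)}) (by simp [hij.symm])
    (measurable_indicator_biSup (by simp) (by simp) hE)
    (measurable_indicator_biSup (by simp) (by simp) hE')

variable {p p' q : ℝ}

lemma integral_indicator_mul_indicator (h : IsModel P N mB U m m2)
    (hE : ∀ i, MeasurableSet[mB i] (E i)) (hE' : ∀ i, MeasurableSet[mB i] (E' i))
    (hp : ∀ i, P.real (E i) = p) (hp' : ∀ i, P.real (E' i) = p')
    (hq : ∀ i, P.real (E i ∩ E' i) = q) (i j : ℕ) :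
    ∫ ω, (E i).indicator (U i) ω * (E' j).indicator (U j) ω ∂P =
      if i = j then q * m2 else p * m * (p' * m) := by
  split_ifs with hij
  · subst hij
    rw [h.integral_indicator_mul_indicator_self (hE i) (hE' i), hq]
  · rw [(h.indepFun_indicator hij (hE i) (hE' j)).integral_fun_mul_eq_mul_integral
      (h.memLp_indicator (hE i)).aestronglyMeasurable
      (h.memLp_indicator (hE' j)).aestronglyMeasurable,
      h.integral_indicator (hE i), h.integral_indicator (hE' j), hp, hp']

lemma integral_partialSum_mul (h : IsModel P N mB U m m2)
    (hE : ∀ i, MeasurableSet[mB i] (E i)) (hE' : ∀ i, MeasurableSet[mB i] (E' i))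
    (hp : ∀ i, P.real (E i) = p) (hp' : ∀ i, P.real (E' i) = p')
    (hq : ∀ i, P.real (E i ∩ E' i) = q) (n : ℕ) :
    ∫ ω, partialSum E U n ω * partialSum E' U n ω ∂P =
      n * (q * m2) + ((n : ℝ) ^ 2 - n) * (p * m * (p' * m)) := by
  have hint (i j : ℕ) :
      Integrable (fun ω => (E i).indicator (U i) ω * (E' j).indicator (U j) ω) P :=
    (h.memLp_indicator (hE i)).integrable_mul (h.memLp_indicator (hE' j))
  simp only [partialSum, sum_mul_sum]
  rw [integral_finsetSum _ fun i _ => integrable_finsetSum _ fun j _ => hint i j]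
  simp only [integral_finsetSum _ fun j _ => hint _ j,
    h.integral_indicator_mul_indicator hE hE' hp hp' hq, sum_sum_ite_eq_diag, Nat.card_Icc,
    Nat.add_sub_cancel]

lemma integral_norm_partialSum_mul_le (h : IsModel P N mB U m m2) (n : ℕ) :
    ∫ ω, ‖partialSum E U n ω * partialSum E' U n ω‖ ∂P ≤ n ^ 2 * m2 := by
  have hbound (ω : Ω) :
      ‖partialSum E U n ω * partialSum E' U n ω‖ ≤ n * ∑ i ∈ Icc 1 n, U i ω ^ 2 := by
    rw [Real.norm_eq_abs, abs_mul]
    nlinarith [two_mul_le_add_sq |partialSum E U n ω| |partialSum E' U n ω|,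
      sq_abs (partialSum E U n ω), sq_abs (partialSum E' U n ω),
      sq_partialSum_le E U n ω, sq_partialSum_le E' U n ω]
  have hint : Integrable (fun ω => ∑ i ∈ Icc 1 n, U i ω ^ 2) P :=
    integrable_finsetSum _ fun i _ => (h.memLp_two i).integrable_sq
  calc ∫ ω, ‖partialSum E U n ω * partialSum E' U n ω‖ ∂P
      ≤ ∫ ω, n * ∑ i ∈ Icc 1 n, U i ω ^ 2 ∂P :=
        integral_mono_of_nonneg (ae_of_all _ fun _ => norm_nonneg _) (hint.const_mul _)
          (ae_of_all _ hbound)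
    _ = n ^ 2 * m2 := by
        rw [integral_const_mul, integral_finsetSum _ fun i _ => (h.memLp_two i).integrable_sq]
        simp only [h.integral_sq_eq, sum_const, Nat.card_Icc, Nat.add_sub_cancel, nsmul_eq_mul]
        ring

lemma measurable_randomSum (h : IsModel P N mB U m m2) (hE : ∀ i, MeasurableSet[mB i] (E i)) :
    Measurable fun ω => partialSum E U (N ω) ω := by
  have hjoint : Measurable fun x : Ω × ℕ => partialSum E U x.2 x.1 :=
    measurable_from_prod_countable_left fun n =>
      (measurable_partialSum hE n).mono (iSup₂_le fun k _ => h.sigmaAlgebra_le k) le_rfl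
  exact hjoint.comp (measurable_id.prodMk h.measurable_count)

variable [IsProbabilityMeasure P]

lemma integral_partialSum (h : IsModel P N mB U m m2) (hE : ∀ i, MeasurableSet[mB i] (E i))
    (hp : ∀ i, P.real (E i) = p) (n : ℕ) :
    ∫ ω, partialSum E U n ω ∂P = n * (p * m) := by
  unfold partialSum
  rw [integral_finsetSum _ fun i _ => (h.memLp_indicator (hE i)).integrable one_le_two]
  simp [h.integral_indicator (hE _), hp]

lemma integrable_randomSum_mul (h : IsModel P N mB U m m2)
    (hE : ∀ i, MeasurableSet[mB i] (E i)) (hE' : ∀ i, MeasurableSet[mB i] (E' i))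
    (hN2 : Integrable (fun ω => (N ω : ℝ) ^ 2) P) :
    Integrable (fun ω => partialSum E U (N ω) ω * partialSum E' U (N ω) ω) P := by
  have hmoment := hasSum_integral_comp_nat h.measurable_count (g := fun n => (n : ℝ) ^ 2) hN2
  refine integrable_comp_of_indep (F := fun n ω => partialSum E U n ω * partialSum E' U n ω)
    h.measurable_count (iSup₂_le fun k _ => h.sigmaAlgebra_le k) h.indep_count
    (fun n => (measurable_partialSum hE n).mul (measurable_partialSum hE' n))
    (fun n => (h.memLp_partialSum hE n).integrable_mul (h.memLp_partialSum hE' n))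
    ((hmoment.summable.mul_right m2).of_nonneg_of_le
      (fun n => mul_nonneg measureReal_nonneg (integral_nonneg fun _ => norm_nonneg _))
      fun n => ?_)
  rw [mul_assoc]
  exact mul_le_mul_of_nonneg_left (h.integral_norm_partialSum_mul_le n) measureReal_nonneg

lemma integral_randomSum_mul (h : IsModel P N mB U m m2)
    (hE : ∀ i, MeasurableSet[mB i] (E i)) (hE' : ∀ i, MeasurableSet[mB i] (E' i))
    (hp : ∀ i, P.real (E i) = p) (hp' : ∀ i, P.real (E' i) = p')
    (hq : ∀ i, P.real (E i ∩ E' i) = q) (hN2 : Integrable (fun ω => (N ω : ℝ) ^ 2) P)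
    {en en2 : ℝ} (hen : ∫ ω, (N ω : ℝ) ∂P = en) (hen2 : ∫ ω, (N ω : ℝ) ^ 2 ∂P = en2) :
    ∫ ω, partialSum E U (N ω) ω * partialSum E' U (N ω) ω ∂P =
      m2 * en * q + m ^ 2 * (en2 - en) * p * p' := by
  have hN := h.measurable_count
  have hsum := hasSum_integral_comp_of_indep
    (F := fun n ω => partialSum E U n ω * partialSum E' U n ω) hN
    (iSup₂_le fun k _ => h.sigmaAlgebra_le k) h.indep_count
    (fun n => (measurable_partialSum hE n).mul (measurable_partialSum hE' n))
    (h.integrable_randomSum_mul hE hE' hN2)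
  have hmean := hasSum_integral_natCast hN hN2
  have hmoment := hasSum_integral_comp_nat hN (g := fun n => (n : ℝ) ^ 2) hN2
  rw [hen] at hmean
  rw [hen2] at hmoment
  simp only [h.integral_partialSum_mul hE hE' hp hp' hq] at hsum
  have hcomb := (hmean.mul_right (q * m2)).add ((hmoment.sub hmean).mul_right (p * m * (p' * m)))
  rw [hsum.unique (hcomb.congr_fun fun n => by ring)]
  ring

lemma integral_randomSum_sq (h : IsModel P N mB U m m2) (hE : ∀ i, MeasurableSet[mB i] (E i))
    (hp : ∀ i, P.real (E i) = p) (hN2 : Integrable (fun ω => (N ω : ℝ) ^ 2) P)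
    {en en2 : ℝ} (hen : ∫ ω, (N ω : ℝ) ∂P = en) (hen2 : ∫ ω, (N ω : ℝ) ^ 2 ∂P = en2) :
    ∫ ω, partialSum E U (N ω) ω ^ 2 ∂P = m2 * en * p + m ^ 2 * (en2 - en) * p * p := by
  simp only [sq (partialSum _ _ _ _)]
  exact h.integral_randomSum_mul hE hE hp hp (fun i => by rw [Set.inter_self, hp]) hN2 hen hen2

lemma integral_randomSum (h : IsModel P N mB U m m2) (hE : ∀ i, MeasurableSet[mB i] (E i))
    (hp : ∀ i, P.real (E i) = p) (hN2 : Integrable (fun ω => (N ω : ℝ) ^ 2) P)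
    {en : ℝ} (hen : ∫ ω, (N ω : ℝ) ∂P = en) :
    ∫ ω, partialSum E U (N ω) ω ∂P = m * en * p := by
  have hN := h.measurable_count
  have hint : Integrable (fun ω => partialSum E U (N ω) ω) P :=
    integrable_of_integrable_sq (h.measurable_randomSum hE).aestronglyMeasurable
      (by simpa only [sq] using h.integrable_randomSum_mul hE hE hN2)
  have hsum := hasSum_integral_comp_of_indep (F := partialSum E U) hN
    (iSup₂_le fun k _ => h.sigmaAlgebra_le k) h.indep_count (measurable_partialSum hE) hint
  have hmean := hasSum_integral_natCast hN hN2
  rw [hen] at hmean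
  simp only [h.integral_partialSum hE hp] at hsum
  rw [hsum.unique ((hmean.mul_right (p * m)).congr_fun fun n => by ring)]
  ring

end IsModel

end RandomToken

theorem stmt9_general {Ω : Type*} [MeasurableSpace Ω] (P : Measure Ω) [IsProbabilityMeasure P]
    (N : Ω → ℕ) (hN : Measurable N) (hN2 : Integrable (fun ω => ((N ω : ℝ)) ^ 2) P)
    (en en2 : ℝ) (hen : ∫ ω, (N ω : ℝ) ∂P = en) (hen2 : ∫ ω, ((N ω : ℝ)) ^ 2 ∂P = en2)
    (Ex Ey : ℕ → Set Ω) (hmx : ∀ i, MeasurableSet (Ex i)) (hmy : ∀ i, MeasurableSet (Ey i))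
    (U : ℕ → Ω → ℝ) (hU : ∀ i, Measurable (U i))
    (hUint : ∀ i, Integrable (fun ω => (U i ω) ^ 2) P)
    (m m2 : ℝ) (hm : ∀ i, ∫ ω, U i ω ∂P = m) (hm2 : ∀ i, ∫ ω, (U i ω) ^ 2 ∂P = m2)
    (hind : iIndep
      (Sum.elim (fun _ : Unit => MeasurableSpace.comap N ⊤)
        (Sum.elim (fun i : ℕ => MeasurableSpace.generateFrom {Ex i, Ey i})
          (fun i : ℕ => MeasurableSpace.comap (U i) (borel ℝ)))) P)
    (px py pxy : ℝ)
    (hpx : ∀ i, (P (Ex i)).toReal = px) (hpy : ∀ i, (P (Ey i)).toReal = py)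
    (hpxy : ∀ i, (P (Ex i ∩ Ey i)).toReal = pxy) :
    let Z : (ℕ → Set Ω) → Ω → ℝ :=
      fun E ω => ∑ i ∈ Finset.Icc 1 (N ω), if ω ∈ E i then U i ω else 0
    let a : ℝ := m2 * en
    let b : ℝ := m ^ 2 * ((en2 - en ^ 2) - en)
    (∫ ω, Z Ex ω ∂P = m * en * px) ∧
    ((∫ ω, Z Ex ω * Z Ey ω ∂P) - (∫ ω, Z Ex ω ∂P) * (∫ ω, Z Ey ω ∂P) =
      a * pxy + b * px * py) ∧
    (((∫ ω, Z Ex ω * Z Ey ω ∂P) - (∫ ω, Z Ex ω ∂P) * (∫ ω, Z Ey ω ∂P)) /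
        Real.sqrt (((∫ ω, (Z Ex ω) ^ 2 ∂P) - (∫ ω, Z Ex ω ∂P) ^ 2) *
          ((∫ ω, (Z Ey ω) ^ 2 ∂P) - (∫ ω, Z Ey ω ∂P) ^ 2)) =
      (a * pxy + b * px * py) / Real.sqrt ((a + b * px) * (a + b * py) * px * py)) := by
  intro Z a b
  have h : RandomToken.IsModel P N (fun i => MeasurableSpace.generateFrom {Ex i, Ey i}) U m m2 :=
    .of_measurable hN (fun i => MeasurableSpace.generateFrom_le (by simp [hmx i, hmy i])) hU hind
      hUint hm hm2
  have hBx (i : ℕ) : MeasurableSet[MeasurableSpace.generateFrom {Ex i, Ey i}] (Ex i) :=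
    MeasurableSpace.measurableSet_generateFrom (by simp)
  have hBy (i : ℕ) : MeasurableSet[MeasurableSpace.generateFrom {Ex i, Ey i}] (Ey i) :=
    MeasurableSpace.measurableSet_generateFrom (by simp)
  have hmeanx : ∫ ω, Z Ex ω ∂P = m * en * px := h.integral_randomSum hBx hpx hN2 hen
  have hmeany : ∫ ω, Z Ey ω ∂P = m * en * py := h.integral_randomSum hBy hpy hN2 hen
  have hxy : ∫ ω, Z Ex ω * Z Ey ω ∂P = m2 * en * pxy + m ^ 2 * (en2 - en) * px * py :=
    h.integral_randomSum_mul hBx hBy hpx hpy hpxy hN2 hen hen2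
  have hxx : ∫ ω, Z Ex ω ^ 2 ∂P = m2 * en * px + m ^ 2 * (en2 - en) * px * px :=
    h.integral_randomSum_sq hBx hpx hN2 hen hen2
  have hyy : ∫ ω, Z Ey ω ^ 2 ∂P = m2 * en * py + m ^ 2 * (en2 - en) * py * py :=
    h.integral_randomSum_sq hBy hpy hN2 hen hen2
  have hcov : ∫ ω, Z Ex ω * Z Ey ω ∂P - (∫ ω, Z Ex ω ∂P) * ∫ ω, Z Ey ω ∂P =
      a * pxy + b * px * py := by
    rw [hxy, hmeanx, hmeany]
    ring
  refine ⟨hmeanx, hcov, ?_⟩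
  rw [hcov, hxx, hyy, hmeanx, hmeany]
  congr 2
  ring

/-- Random token field `Z_{RT}(x) = ∑_{i=1}^{N} U_i 1_{x∈B_i}`, with `N` an `ℕ`-valued random
variable with finite second moment, `(B_i)` i.i.d. random sets (`Ex i = {x ∈ B_i}`,
`Ey i = {y ∈ B_i}`), `(U_i)` i.i.d. with mean `m` and second moment `m2`, all jointly
independent.  Then `E[Z_{RT}(x)] = EU·EN·p_x`,
`Cov(Z_{RT}(x),Z_{RT}(y)) = E[U²]·EN·p_{xy} + (EU)²·(Var N - EN)·p_x·p_y`, and the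
correlation is `(a·p_{xy}+b·p_x·p_y)/√((a+b·p_x)(a+b·p_y)·p_x·p_y)` with
`a = E[U²]·EN` and `b = (EU)²·(Var N - EN)`. -/
theorem stmt9 {Ω : Type*} [MeasurableSpace Ω] (P : Measure Ω) [IsProbabilityMeasure P]
    (N : Ω → ℕ) (hN : Measurable N) (hN2 : Integrable (fun ω => ((N ω : ℝ)) ^ 2) P)
    (en en2 : ℝ) (hen : ∫ ω, (N ω : ℝ) ∂P = en) (hen2 : ∫ ω, ((N ω : ℝ)) ^ 2 ∂P = en2)
    (hen0 : 0 < en)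
    (Ex Ey : ℕ → Set Ω) (hmx : ∀ i, MeasurableSet (Ex i)) (hmy : ∀ i, MeasurableSet (Ey i))
    (U : ℕ → Ω → ℝ) (hU : ∀ i, Measurable (U i))
    (hUid : ∀ i j, Measure.map (U i) P = Measure.map (U j) P)
    (hUint : ∀ i, Integrable (fun ω => (U i ω) ^ 2) P)
    (m m2 : ℝ) (hm : ∀ i, ∫ ω, U i ω ∂P = m) (hm2 : ∀ i, ∫ ω, (U i ω) ^ 2 ∂P = m2)
    (hind : iIndep
      (Sum.elim (fun _ : Unit => MeasurableSpace.comap N ⊤)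
        (Sum.elim (fun i : ℕ => MeasurableSpace.generateFrom {Ex i, Ey i})
          (fun i : ℕ => MeasurableSpace.comap (U i) (borel ℝ)))) P)
    (px py pxy : ℝ) (hpx0 : 0 < px) (hpy0 : 0 < py)
    (hpx : ∀ i, (P (Ex i)).toReal = px) (hpy : ∀ i, (P (Ey i)).toReal = py)
    (hpxy : ∀ i, (P (Ex i ∩ Ey i)).toReal = pxy) :
    let Z : (ℕ → Set Ω) → Ω → ℝ :=
      fun E ω => ∑ i ∈ Finset.Icc 1 (N ω), if ω ∈ E i then U i ω else 0
    let a : ℝ := m2 * en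
    let b : ℝ := m ^ 2 * ((en2 - en ^ 2) - en)
    (∫ ω, Z Ex ω ∂P = m * en * px) ∧
    ((∫ ω, Z Ex ω * Z Ey ω ∂P) - (∫ ω, Z Ex ω ∂P) * (∫ ω, Z Ey ω ∂P) =
      a * pxy + b * px * py) ∧
    (((∫ ω, Z Ex ω * Z Ey ω ∂P) - (∫ ω, Z Ex ω ∂P) * (∫ ω, Z Ey ω ∂P)) /
        Real.sqrt (((∫ ω, (Z Ex ω) ^ 2 ∂P) - (∫ ω, Z Ex ω ∂P) ^ 2) *
          ((∫ ω, (Z Ey ω) ^ 2 ∂P) - (∫ ω, Z Ey ω ∂P) ^ 2)) =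
      (a * pxy + b * px * py) / Real.sqrt ((a + b * px) * (a + b * py) * px * py)) :=
  stmt9_general P N hN hN2 en en2 hen hen2 Ex Ey hmx hmy U hU hUint m m2 hm hm2 hind px py pxy hpx
    hpy hpxy
end

section
/- Define A_n = ∑_{I,J⊆{1,…,n}, g(I)=g(J)} P(x∈C_I, y∈C_J), where g(I)=1_{I≠∅}·max I. Then A_n satisfies the recurrence A_{n+1} = P(x,y∉B)·A_n + P(x,y∈B), and hence A_n = P(x,y∈B)/(1-P(x,y∉B)) + [P(x∈B,y∉B)+P(x∉B,y∈B)]/(1-P(x,y∉B))·P(x,y∉B)^n, provided P(x,y∉B) < 1. -/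
/-!
Peel off the largest index `n + 1`. A pair of subsets of `{1, …, n + 1}` either avoids it in
both coordinates, contributing `p₀₀` times the pair's weight at level `n`, or contains it in
both, where the maxima agree automatically and the weight gains a factor `p₁₁`; pairs containing
it in exactly one coordinate have different maxima and drop out. Since the cell weights sum to
`(p₁₁ + p₁₀ + p₀₁ + p₀₀)ⁿ = 1`, this gives `A (n + 1) = p₀₀ A n + p₁₁`, and solving the affine
recurrence from `A 0 = 1` gives the closed form.
-/

open Finset

lemma Finset.sum_powerset_insert_pair {α M : Type*} [DecidableEq α] [AddCommMonoid M]
    {a : α} {s : Finset α} (ha : a ∉ s) (f : Finset α → Finset α → M) :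
    ∑ I ∈ (insert a s).powerset, ∑ J ∈ (insert a s).powerset, f I J =
      ∑ I ∈ s.powerset, ∑ J ∈ s.powerset,
        (f I J + f I (insert a J) + f (insert a I) J + f (insert a I) (insert a J)) := by
  simp only [sum_powerset_insert ha, sum_add_distrib]
  abel

section CellWeight

variable {α R : Type*} [DecidableEq α] [CommSemiring R] (p11 p10 p01 p00 : R)

/-- The multinomial probability `P(x ∈ C_I, y ∈ C_J)` of a mosaic over the ground set `S`. -/
def cellWeight (S I J : Finset α) : R :=
  p11 ^ #(I ∩ J) * p10 ^ #(I \ J) * p01 ^ #(J \ I) * p00 ^ #(S \ (I ∪ J))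

variable {p11 p10 p01 p00} {a : α} {S I J : Finset α}

lemma cellWeight_insert_ground (ha : a ∉ S) (haI : a ∉ I) (haJ : a ∉ J) :
    cellWeight p11 p10 p01 p00 (insert a S) I J = p00 * cellWeight p11 p10 p01 p00 S I J := by
  have haIJ : a ∉ I ∪ J := by simp [haI, haJ]
  have haS : a ∉ S \ (I ∪ J) := fun h => ha (mem_sdiff.1 h).1
  rw [cellWeight, cellWeight, insert_sdiff_of_notMem _ haIJ, card_insert_of_notMem haS]
  ring

lemma cellWeight_insert_right (ha : a ∉ S) (haI : a ∉ I) (haJ : a ∉ J) :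
    cellWeight p11 p10 p01 p00 (insert a S) I (insert a J) =
      p01 * cellWeight p11 p10 p01 p00 S I J := by
  have haJI : a ∉ J \ I := fun h => haJ (mem_sdiff.1 h).1
  rw [cellWeight, cellWeight, inter_insert_of_notMem haI, sdiff_insert_of_notMem haI,
    insert_sdiff_of_notMem _ haI, card_insert_of_notMem haJI, union_insert,
    insert_sdiff_insert, sdiff_insert_of_notMem ha]
  ring

lemma cellWeight_insert_left (ha : a ∉ S) (haI : a ∉ I) (haJ : a ∉ J) :
    cellWeight p11 p10 p01 p00 (insert a S) (insert a I) J =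
      p10 * cellWeight p11 p10 p01 p00 S I J := by
  have haIJ : a ∉ I \ J := fun h => haI (mem_sdiff.1 h).1
  rw [cellWeight, cellWeight, insert_inter_of_notMem haJ, sdiff_insert_of_notMem haJ,
    insert_sdiff_of_notMem _ haJ, card_insert_of_notMem haIJ, insert_union,
    insert_sdiff_insert, sdiff_insert_of_notMem ha]
  ring

lemma cellWeight_insert_insert (ha : a ∉ S) (haI : a ∉ I) (haJ : a ∉ J) :
    cellWeight p11 p10 p01 p00 (insert a S) (insert a I) (insert a J) =
      p11 * cellWeight p11 p10 p01 p00 S I J := by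
  have haIJ : a ∉ I ∩ J := fun h => haI (mem_inter.1 h).1
  rw [cellWeight, cellWeight, ← insert_inter_distrib, card_insert_of_notMem haIJ,
    insert_sdiff_insert, sdiff_insert_of_notMem haI, insert_sdiff_insert,
    sdiff_insert_of_notMem haJ, ← insert_union_distrib, insert_sdiff_insert,
    sdiff_insert_of_notMem ha]
  ring

theorem sum_cellWeight (S : Finset α) :
    ∑ I ∈ S.powerset, ∑ J ∈ S.powerset, cellWeight p11 p10 p01 p00 S I J =
      (p11 + p10 + p01 + p00) ^ #S := by
  induction S using Finset.induction_on with
  | empty => simp [cellWeight]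
  | insert a S ha ih =>
    rw [sum_powerset_insert_pair ha, card_insert_of_notMem ha, pow_succ', ← ih, mul_sum]
    refine sum_congr rfl fun I hI => ?_
    rw [mul_sum]
    refine sum_congr rfl fun J hJ => ?_
    have haI : a ∉ I := fun h => ha (mem_powerset.1 hI h)
    have haJ : a ∉ J := fun h => ha (mem_powerset.1 hJ h)
    rw [cellWeight_insert_ground ha haI haJ, cellWeight_insert_right ha haI haJ,
      cellWeight_insert_left ha haI haJ, cellWeight_insert_insert ha haI haJ]
    ring

end CellWeight

section SupMatch

variable {R : Type*} [CommSemiring R] (p11 p10 p01 p00 : R)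

/-- `A` over the ground set `S`: `Finset.sup id` plays the role of `g`, as `∅.sup id = 0`. -/
def supMatchSum (S : Finset ℕ) : R :=
  ∑ I ∈ S.powerset, ∑ J ∈ S.powerset,
    if I.sup id = J.sup id then cellWeight p11 p10 p01 p00 S I J else 0

theorem supMatchSum_insert {a : ℕ} {S : Finset ℕ} (hS : S.sup id < a) :
    supMatchSum p11 p10 p01 p00 (insert a S) =
      p00 * supMatchSum p11 p10 p01 p00 S + p11 * (p11 + p10 + p01 + p00) ^ #S := by
  have ha : a ∉ S := fun h => (le_sup (f := id) h).not_gt hS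
  rw [supMatchSum, supMatchSum, sum_powerset_insert_pair ha, ← sum_cellWeight, mul_sum,
    mul_sum, ← sum_add_distrib]
  refine sum_congr rfl fun I hI => ?_
  rw [mul_sum, mul_sum, ← sum_add_distrib]
  refine sum_congr rfl fun J hJ => ?_
  have hIa : I.sup id < a := (sup_mono (mem_powerset.1 hI)).trans_lt hS
  have hJa : J.sup id < a := (sup_mono (mem_powerset.1 hJ)).trans_lt hS
  have haI : a ∉ I := fun h => (le_sup (f := id) h).not_gt hIa
  have haJ : a ∉ J := fun h => (le_sup (f := id) h).not_gt hJa
  have sup_insert_eq {K : Finset ℕ} (hK : K.sup id < a) : (insert a K).sup id = a := by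
    rw [sup_insert, id_eq, sup_eq_left.2 hK.le]
  rw [sup_insert_eq hIa, sup_insert_eq hJa, if_neg hJa.ne', if_neg hIa.ne, if_pos rfl,
    cellWeight_insert_ground ha haI haJ, cellWeight_insert_insert ha haI haJ]
  split_ifs <;> ring

end SupMatch

theorem stmt11_general (p11 p10 p01 p00 : ℝ) (hsum : p11 + p10 + p01 + p00 = 1)
    (A : ℕ → ℝ)
    (hA : ∀ n : ℕ, A n =
      ∑ I ∈ (Finset.Icc 1 n).powerset, ∑ J ∈ (Finset.Icc 1 n).powerset,
        if I.sup id = J.sup id then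
          p11 ^ (I ∩ J).card * p10 ^ (I \ J).card * p01 ^ (J \ I).card *
            p00 ^ (n - (I ∪ J).card)
        else 0) :
    (∀ n : ℕ, A (n + 1) = p00 * A n + p11) ∧
    (p00 < 1 → ∀ n : ℕ,
      A n = p11 / (1 - p00) + (p10 + p01) / (1 - p00) * p00 ^ n) := by
  have hA_eq : ∀ n, A n = supMatchSum p11 p10 p01 p00 (Icc 1 n) := fun n => by
    rw [hA n, supMatchSum]
    refine sum_congr rfl fun I hI => sum_congr rfl fun J hJ => ?_
    rw [cellWeight, card_sdiff_of_subset (union_subset (mem_powerset.1 hI) (mem_powerset.1 hJ)),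
      Nat.card_Icc, Nat.add_sub_cancel]
  have hrec : ∀ n, A (n + 1) = p00 * A n + p11 := fun n => by
    have hsup : (Icc 1 n).sup id < n + 1 :=
      Nat.lt_succ_of_le (Finset.sup_le fun x hx => (mem_Icc.1 hx).2)
    rw [hA_eq, hA_eq, ← insert_Icc_right_eq_Icc_add_one (by omega),
      supMatchSum_insert _ _ _ _ hsup, hsum, one_pow, mul_one]
  refine ⟨hrec, fun hlt n => ?_⟩
  have hne : 1 - p00 ≠ 0 := by linarith
  induction n with
  | zero =>
    have hA0 : A 0 = 1 := by simp [hA_eq, supMatchSum, cellWeight]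
    rw [hA0]
    field_simp
    linarith
  | succ n ih =>
    rw [hrec, ih]
    field_simp
    ring

/-- With `g(I) = 1_{I≠∅}·max I` and the multinomial cell formula
`P(x∈C_I, y∈C_J) = p₁₁^{|I∩J|} p₁₀^{|I\J|} p₀₁^{|J\I|} p₀₀^{n-|I∪J|}` (where
`p₁₁ = P(x,y∈B)`, `p₁₀ = P(x∈B,y∉B)`, `p₀₁ = P(x∉B,y∈B)`, `p₀₀ = P(x,y∉B)`), the quantity
`A_n = ∑_{I,J⊆{1,…,n}, g(I)=g(J)} P(x∈C_I,y∈C_J)` satisfies `A_{n+1} = p₀₀·A_n + p₁₁`, and if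
`p₀₀ < 1` then `A_n = p₁₁/(1-p₀₀) + (p₁₀+p₀₁)/(1-p₀₀)·p₀₀ⁿ`. -/
theorem stmt11 (p11 p10 p01 p00 : ℝ) (h11 : 0 ≤ p11) (h10 : 0 ≤ p10) (h01 : 0 ≤ p01)
    (h00 : 0 ≤ p00) (hsum : p11 + p10 + p01 + p00 = 1)
    (A : ℕ → ℝ)
    (hA : ∀ n : ℕ, A n =
      ∑ I ∈ (Finset.Icc 1 n).powerset, ∑ J ∈ (Finset.Icc 1 n).powerset,
        if I.sup id = J.sup id then
          p11 ^ (I ∩ J).card * p10 ^ (I \ J).card * p01 ^ (J \ I).card *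
            p00 ^ (n - (I ∪ J).card)
        else 0) :
    (∀ n : ℕ, A (n + 1) = p00 * A n + p11) ∧
    (p00 < 1 → ∀ n : ℕ,
      A n = p11 / (1 - p00) + (p10 + p01) / (1 - p00) * p00 ^ n) :=
  stmt11_general p11 p10 p01 p00 hsum A hA
end

section
/- Let M ⊆ ℝ^d be contained in the closed ball of radius C_M about the origin. Let X be uniform on S^{d-1}, R uniform on [-C_M, C_M], independent, and H = {z : ⟨z, X⟩ ≥ R}. Then for all x, y ∈ M: P(x ∈ H) = 1/2 and P(x ∈ H, y ∈ H) = 1/2 - ‖x-y‖·Γ(d/2)/(4√π·C_M·Γ((d+1)/2)). -/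
/-!
Fix a direction `u`. Then `x ∈ H` means `R ≤ ⟪x, u⟫`, and `R` is uniform on `[-C, C]` and
independent of `X`, so `P(x ∈ H) = (E⟪x, X⟫ + C) / (2C)`; for both points the same holds with
`min ⟪x, X⟫ ⟪y, X⟫ = (⟪x, X⟫ + ⟪y, X⟫ - |⟪x - y, X⟫|) / 2`. The linear terms vanish by
symmetry, and `E|⟪v, X⟫| = ‖v‖ Γ(d/2) / (√π Γ((d+1)/2))`.

The sphere integrals come from integrating `e^{-‖z‖²}`, `⟪v, z⟫ e^{-‖z‖²}` and
`|⟪v, z⟫| e^{-‖z‖²}` over `ℝ^d` in two ways: in polar coordinates, where the radial factor is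
a Gamma integral, and, after a reflection moving `v` onto a coordinate axis, as a product of
one-dimensional Gaussian integrals.
-/

open MeasureTheory ProbabilityTheory

open Metric Set Real

theorem integral_Ioi_pow_mul_exp_neg_sq (n : ℕ) :
    ∫ x in Ioi (0 : ℝ), x ^ n * exp (-x ^ 2) = Gamma ((n + 1) / 2) / 2 := by
  have h := integral_rpow_mul_exp_neg_rpow (p := 2) (q := n) two_pos
    (neg_one_lt_zero.trans_le n.cast_nonneg)
  rw [one_div_mul_eq_div] at h
  rw [← h]
  refine setIntegral_congr_fun measurableSet_Ioi fun x _ => ?_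
  rw [rpow_natCast, rpow_two]

theorem integral_abs_mul_exp_neg_sq : ∫ t : ℝ, |t| * exp (-t ^ 2) = 1 := by
  have h := integral_Ioi_pow_mul_exp_neg_sq 1
  norm_num at h
  have habs := integral_comp_abs (f := fun t => t * exp (-t ^ 2))
  simp only [sq_abs] at habs
  rw [habs, h]
  norm_num

namespace MeasureTheory.Measure

theorem integral_volumeIoiPow (n : ℕ) (f : ℝ → ℝ) :
    ∫ r, f r.1 ∂volumeIoiPow n = ∫ x in Ioi 0, x ^ n * f x := by
  rw [volumeIoiPow, integral_withDensity_eq_integral_toReal_smul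
      (measurable_subtype_coe.pow_const _).ennreal_ofReal
      (ae_of_all _ fun _ => ENNReal.ofReal_lt_top),
    integral_subtype_comap measurableSet_Ioi fun x => (ENNReal.ofReal (x ^ n)).toReal • f x]
  refine setIntegral_congr_fun measurableSet_Ioi fun x hx => ?_
  simp [ENNReal.toReal_ofReal (pow_nonneg (le_of_lt hx) n)]

theorem integral_volumeIoiPow_pow_mul_exp_neg_sq (n k : ℕ) :
    ∫ r, r.1 ^ k * exp (-r.1 ^ 2) ∂volumeIoiPow n = Gamma ((n + k + 1) / 2) / 2 := by
  rw [integral_volumeIoiPow n fun x => x ^ k * exp (-x ^ 2)]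
  simp_rw [← mul_assoc, ← pow_add]
  exact_mod_cast integral_Ioi_pow_mul_exp_neg_sq (n + k)

variable {E : Type*} [NormedAddCommGroup E] [InnerProductSpace ℝ E] [FiniteDimensional ℝ E]
  [MeasurableSpace E] [BorelSpace E] [Nontrivial E] (μ : Measure E) [μ.IsAddHaarMeasure]

theorem integral_eq_integral_toSphere_prod (F : E → ℝ) :
    ∫ z, F z ∂μ = ∫ p, F (p.2.1 • (p.1 : E))
      ∂(μ.toSphere.prod (volumeIoiPow (Module.finrank ℝ E - 1))) := by
  conv_lhs => rw [← restrict_compl_singleton (μ := μ) 0,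
    ← integral_subtype_comap (measurableSet_singleton _).compl]
  rw [← μ.measurePreserving_homeomorphUnitSphereProd.integral_comp
    (Homeomorph.measurableEmbedding _)]
  congr with x
  simp [smul_smul, norm_ne_zero_iff.mpr x.2]

theorem integral_mul_exp_neg_sq_norm_of_homogeneous (k : ℕ) (F : E → ℝ)
    (hF : ∀ (r : ℝ) (u : E), 0 < r → F (r • u) = r ^ k * F u) :
    ∫ z, F z * exp (-‖z‖ ^ 2) ∂μ =
      (∫ u, F u ∂μ.toSphere) * (Gamma ((Module.finrank ℝ E + k) / 2) / 2) := by
  have hpolar (p : sphere (0 : E) 1 × Ioi (0 : ℝ)) :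
      F (p.2.1 • (p.1 : E)) * exp (-‖p.2.1 • (p.1 : E)‖ ^ 2) =
        F p.1 * (p.2.1 ^ k * exp (-p.2.1 ^ 2)) := by
    rw [hF _ _ p.2.2, norm_smul, norm_eq_of_mem_sphere, mul_one, norm_of_nonneg p.2.2.le]
    ring
  rw [integral_eq_integral_toSphere_prod, integral_congr_ae (ae_of_all _ hpolar),
    integral_prod_mul (fun u : sphere (0 : E) 1 => F u)
      fun r : Ioi (0 : ℝ) => r.1 ^ k * exp (-r.1 ^ 2),
    integral_volumeIoiPow_pow_mul_exp_neg_sq, Nat.cast_pred Module.finrank_pos]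
  ring_nf

end MeasureTheory.Measure

section InnerProductSpace

variable {E : Type*} [NormedAddCommGroup E] [InnerProductSpace ℝ E]

theorem abs_inner_le_of_mem_sphere (v : E) (u : sphere (0 : E) 1) :
    |inner ℝ v (u : E)| ≤ ‖v‖ := by
  simpa using abs_real_inner_le_norm v u

variable [MeasurableSpace E] [BorelSpace E]

theorem integrable_inner_sphere (ν : Measure (sphere (0 : E) 1)) [IsFiniteMeasure ν] (v : E) :
    Integrable (fun u : sphere (0 : E) 1 => inner ℝ v (u : E)) ν :=
  .of_bound (by fun_prop : Continuous _).aestronglyMeasurable ‖v‖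
    (ae_of_all _ (abs_inner_le_of_mem_sphere v))

variable [FiniteDimensional ℝ E]

theorem integral_inner_norm_eq_of_norm_eq (F : ℝ → ℝ → ℝ) {e e' : E} (h : ‖e‖ = ‖e'‖) :
    ∫ z, F (inner ℝ e z) ‖z‖ = ∫ z, F (inner ℝ e' z) ‖z‖ := by
  set f := Submodule.reflection (ℝ ∙ (e - e'))ᗮ
  have hfe : f e = e' := Submodule.reflection_sub h
  conv_rhs => rw [← hfe, ← f.measurePreserving.integral_comp f.toHomeomorph.measurableEmbedding]
  simp only [LinearIsometryEquiv.inner_map_map, LinearIsometryEquiv.norm_map]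

theorem integral_inner_mul_exp_neg_sq_norm (v : E) :
    ∫ z, inner ℝ v z * exp (-‖z‖ ^ 2) = 0 := by
  have h := integral_inner_norm_eq_of_norm_eq (fun s r => s * exp (-r ^ 2)) (norm_neg v).symm
  simp only [inner_neg_left, neg_mul, integral_neg] at h
  linarith

theorem integral_inner_toSphere [Nontrivial E] (v : E) :
    ∫ u, inner ℝ v (u : E) ∂(volume : Measure E).toSphere = 0 := by
  have h := (volume : Measure E).integral_mul_exp_neg_sq_norm_of_homogeneous 1 (inner ℝ v)
    fun r u _ => by rw [inner_smul_right, pow_one]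
  rw [integral_inner_mul_exp_neg_sq_norm] at h
  have hΓ : 0 < Gamma ((Module.finrank ℝ E + 1 : ℕ) / 2) := Gamma_pos_of_pos (by positivity)
  push_cast at hΓ
  nlinarith [h]

variable (E) in
noncomputable def uniformSphere : Measure (sphere (0 : E) 1) :=
  ((volume : Measure E).toSphere univ)⁻¹ • (volume : Measure E).toSphere

theorem integral_inner_uniformSphere [Nontrivial E] (v : E) :
    ∫ u, inner ℝ v (u : E) ∂uniformSphere E = 0 := by
  rw [uniformSphere, integral_smul_measure, integral_inner_toSphere, smul_zero]

end InnerProductSpace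

namespace EuclideanSpace

variable {ι : Type*} [Fintype ι]

theorem integral_prod_apply (f : ι → ℝ → ℝ) :
    ∫ x : EuclideanSpace ℝ ι, ∏ i, f i (x i) = ∏ i, ∫ t, f i t := by
  rw [← integral_fintype_prod_volume_eq_prod,
    ← (volume_preserving_symm_measurableEquiv_toLp ι).integral_comp']
  rfl

theorem integral_exp_neg_sq_norm :
    ∫ x : EuclideanSpace ℝ ι, exp (-‖x‖ ^ 2) = √π ^ Fintype.card ι := by
  have h (x : EuclideanSpace ℝ ι) : exp (-‖x‖ ^ 2) = ∏ i, exp (-x i ^ 2) := by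
    rw [real_norm_sq_eq, ← exp_sum, Finset.sum_neg_distrib]
  have hgauss : ∫ t : ℝ, exp (-t ^ 2) = √π := by simpa using integral_gaussian 1
  simp_rw [h, integral_prod_apply fun _ t => exp (-t ^ 2), hgauss, Finset.prod_const,
    Finset.card_univ]

theorem integral_abs_apply_mul_exp_neg_sq_norm [DecidableEq ι] (i : ι) :
    ∫ x : EuclideanSpace ℝ ι, |x i| * exp (-‖x‖ ^ 2) = √π ^ (Fintype.card ι - 1) := by
  set f : ι → ℝ → ℝ := fun j t => (if j = i then |t| else 1) * exp (-t ^ 2)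
  have h (x : EuclideanSpace ℝ ι) : |x i| * exp (-‖x‖ ^ 2) = ∏ j, f j (x j) := by
    rw [Finset.prod_mul_distrib, Finset.prod_ite_eq', if_pos (Finset.mem_univ _),
      real_norm_sq_eq, ← exp_sum, Finset.sum_neg_distrib]
  have hf (j : ι) : ∫ t, f j t = if j = i then 1 else √π := by
    split_ifs with hj
    · simpa [f, hj] using integral_abs_mul_exp_neg_sq
    · simpa [f, hj] using integral_gaussian 1
  simp_rw [h, integral_prod_apply, hf, Finset.prod_ite, Finset.prod_const_one, one_mul,
    Finset.prod_const, Finset.filter_ne', Finset.card_erase_of_mem (Finset.mem_univ _),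
    Finset.card_univ]

variable [Nonempty ι]

theorem integral_abs_inner_mul_exp_neg_sq_norm (v : EuclideanSpace ℝ ι) :
    ∫ x, |inner ℝ v x| * exp (-‖x‖ ^ 2) = ‖v‖ * √π ^ (Fintype.card ι - 1) := by
  classical
  let i : ι := Classical.arbitrary ι
  calc ∫ x, |inner ℝ v x| * exp (-‖x‖ ^ 2)
      = ∫ x, |inner ℝ (‖v‖ • single i 1) x| * exp (-‖x‖ ^ 2) :=
        integral_inner_norm_eq_of_norm_eq (fun s r => |s| * exp (-r ^ 2)) (by simp [norm_smul])
    _ = ‖v‖ * ∫ x : EuclideanSpace ℝ ι, |x i| * exp (-‖x‖ ^ 2) := by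
        simp [inner_smul_left, inner_single_left, abs_mul, integral_const_mul, mul_assoc]
    _ = ‖v‖ * √π ^ (Fintype.card ι - 1) := by rw [integral_abs_apply_mul_exp_neg_sq_norm]

theorem toSphere_real_univ :
    (volume : Measure (EuclideanSpace ℝ ι)).toSphere.real univ =
      2 * √π ^ Fintype.card ι / Gamma (Fintype.card ι / 2) := by
  have h := (volume : Measure (EuclideanSpace ℝ ι)).integral_mul_exp_neg_sq_norm_of_homogeneous
    0 (fun _ => 1) fun r u _ => by rw [pow_zero, mul_one]
  simp only [one_mul, integral_const, smul_eq_mul, mul_one, finrank_euclideanSpace,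
    Nat.cast_zero, add_zero, integral_exp_neg_sq_norm] at h
  have hΓ : 0 < Gamma (Fintype.card ι / 2) := Gamma_pos_of_pos (by positivity)
  field_simp
  linarith

theorem integral_abs_inner_toSphere (v : EuclideanSpace ℝ ι) :
    ∫ u, |inner ℝ v (u : EuclideanSpace ℝ ι)|
        ∂(volume : Measure (EuclideanSpace ℝ ι)).toSphere =
      ‖v‖ * (2 * √π ^ (Fintype.card ι - 1) / Gamma ((Fintype.card ι + 1) / 2)) := by
  have h := (volume : Measure (EuclideanSpace ℝ ι)).integral_mul_exp_neg_sq_norm_of_homogeneous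
    1 (fun x => |inner ℝ v x|) fun r u hr => by
      rw [inner_smul_right, abs_mul, abs_of_pos hr, pow_one]
  rw [integral_abs_inner_mul_exp_neg_sq_norm, finrank_euclideanSpace, Nat.cast_one] at h
  have hΓ : 0 < Gamma ((Fintype.card ι + 1) / 2) := Gamma_pos_of_pos (by positivity)
  field_simp
  linarith

theorem integral_abs_inner_uniformSphere (v : EuclideanSpace ℝ ι) :
    ∫ u, |inner ℝ v (u : EuclideanSpace ℝ ι)| ∂uniformSphere (EuclideanSpace ℝ ι) =
      ‖v‖ * (Gamma (Fintype.card ι / 2) / (√π * Gamma ((Fintype.card ι + 1) / 2))) := by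
  rw [uniformSphere, integral_smul_measure, ENNReal.toReal_inv, ← measureReal_def,
    toSphere_real_univ, integral_abs_inner_toSphere, smul_eq_mul]
  have hpow : √π ^ Fintype.card ι = √π ^ (Fintype.card ι - 1) * √π := by
    rw [← pow_succ, Nat.sub_add_cancel Fintype.card_pos]
  rw [hpow]
  field_simp

end EuclideanSpace

theorem integral_min_eq {α : Type*} [MeasurableSpace α] {μ : Measure α} {f g : α → ℝ}
    (hf : Integrable f μ) (hg : Integrable g μ) :
    ∫ a, min (f a) (g a) ∂μ =
      (∫ a, f a ∂μ + ∫ a, g a ∂μ - ∫ a, |f a - g a| ∂μ) / 2 := by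
  simp_rw [inf_eq_half_smul_add_sub_abs_sub' ℝ, abs_sub_comm (g _), smul_eq_mul]
  rw [integral_const_mul, integral_sub (f := fun a => f a + g a) (g := fun a => |f a - g a|)
    (hf.add hg) (hf.sub hg).abs, integral_add hf hg]
  ring

theorem uniformIcc_apply_Iic {a b t : ℝ} (hab : a < b) (ht : t ≤ b) :
    ((ENNReal.ofReal (b - a))⁻¹ • volume.restrict (Icc a b)) (Iic t) =
      ENNReal.ofReal ((t - a) / (b - a)) := by
  have hinter : Iic t ∩ Icc a b = Icc a t := by
    ext s
    simp only [mem_inter_iff, mem_Iic, mem_Icc]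
    exact ⟨fun h => ⟨h.2.1, h.1⟩, fun h => ⟨h.2, h.1, h.2.trans ht⟩⟩
  rw [Measure.smul_apply, Measure.restrict_apply measurableSet_Iic, hinter, volume_Icc,
    smul_eq_mul, ENNReal.ofReal_div_of_pos (sub_pos.mpr hab), ENNReal.div_eq_inv_mul]

theorem measureReal_le_comp_of_indepFun {Ω α : Type*} [MeasurableSpace Ω] [MeasurableSpace α]
    {P : Measure Ω} [IsProbabilityMeasure P] {X : Ω → α} {R : Ω → ℝ} (hX : Measurable X)
    (hR : Measurable R) (hindep : IndepFun X R P) {a b : ℝ} (hab : a < b)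
    (hRunif : P.map R = (ENNReal.ofReal (b - a))⁻¹ • volume.restrict (Icc a b))
    (φ : α → ℝ) (hφ : Measurable φ) (hφa : ∀ u, a ≤ φ u) (hφb : ∀ u, φ u ≤ b) :
    P.real {ω | R ω ≤ φ (X ω)} = ((∫ u, φ u ∂P.map X) - a) / (b - a) := by
  have : IsProbabilityMeasure (P.map X) := Measure.isProbabilityMeasure_map hX.aemeasurable
  have hS : MeasurableSet {p : α × ℝ | p.2 ≤ φ p.1} :=
    measurableSet_le measurable_snd (hφ.comp measurable_fst)
  have hφint : Integrable φ (P.map X) := .of_bound hφ.aestronglyMeasurable (max |a| |b|)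
    (ae_of_all _ fun u => abs_le_max_abs_abs (hφa u) (hφb u))
  have hnonneg (u : α) : 0 ≤ (φ u - a) / (b - a) :=
    div_nonneg (sub_nonneg.mpr (hφa u)) (sub_pos.mpr hab).le
  have hjoint : P.map (fun ω => (X ω, R ω)) = (P.map X).prod (P.map R) :=
    (indepFun_iff_map_prod_eq_prod_map_map hX.aemeasurable hR.aemeasurable).mp hindep
  have hcdf : ∫⁻ u, P.map R (Iic (φ u)) ∂P.map X =
      ENNReal.ofReal (∫ u, (φ u - a) / (b - a) ∂P.map X) := by
    simp_rw [hRunif, uniformIcc_apply_Iic hab (hφb _)]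
    exact (ofReal_integral_eq_lintegral_ofReal ((hφint.sub (integrable_const a)).div_const _)
      (ae_of_all _ hnonneg)).symm
  calc P.real {ω | R ω ≤ φ (X ω)}
      = (P.map (fun ω => (X ω, R ω)) {p | p.2 ≤ φ p.1}).toReal := by
        rw [Measure.map_apply (hX.prodMk hR) hS]; rfl
    _ = ∫ u, (φ u - a) / (b - a) ∂P.map X := by
        rw [hjoint, Measure.prod_apply hS]
        exact (congrArg ENNReal.toReal hcdf).trans
          (ENNReal.toReal_ofReal (integral_nonneg hnonneg))
    _ = ((∫ u, φ u ∂P.map X) - a) / (b - a) := by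
        rw [integral_div, integral_sub hφint (integrable_const a)]
        simp

/-- Let `M ⊆ ℝ^d` be contained in the closed ball of radius `C` about the origin, let `X` be
uniform on `S^{d-1}`, `R` uniform on `[-C, C]`, independent, and
`H = {z : ⟨z, X⟩ ≥ R}` the random half-space.  Then for all `x, y ∈ M`: `P(x ∈ H) = 1/2` and
`P(x ∈ H, y ∈ H) = 1/2 - ‖x-y‖·Γ(d/2)/(4√π·C·Γ((d+1)/2))`. -/
theorem stmt15 {Ω : Type*} [MeasurableSpace Ω] (P : Measure Ω) [IsProbabilityMeasure P]
    (d : ℕ) (hd : 1 ≤ d) (C : ℝ) (hC : 0 < C)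
    (X : Ω → Metric.sphere (0 : EuclideanSpace ℝ (Fin d)) 1) (hX : Measurable X)
    (R : Ω → ℝ) (hR : Measurable R)
    (hXunif : Measure.map X P =
      (((volume : Measure (EuclideanSpace ℝ (Fin d))).toSphere Set.univ)⁻¹ •
        (volume : Measure (EuclideanSpace ℝ (Fin d))).toSphere))
    (hRunif : Measure.map R P =
      (ENNReal.ofReal (2 * C))⁻¹ • volume.restrict (Set.Icc (-C) C))
    (hindep : IndepFun X R P)
    (x y : EuclideanSpace ℝ (Fin d)) (hx : ‖x‖ ≤ C) (hy : ‖y‖ ≤ C) :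
    (P {ω | R ω ≤ (inner ℝ x ((X ω : EuclideanSpace ℝ (Fin d))) : ℝ)}).toReal = 1 / 2 ∧
    (P {ω | R ω ≤ (inner ℝ x ((X ω : EuclideanSpace ℝ (Fin d))) : ℝ) ∧
        R ω ≤ (inner ℝ y ((X ω : EuclideanSpace ℝ (Fin d))) : ℝ)}).toReal =
      1 / 2 - ‖x - y‖ * Real.Gamma (d / 2) /
        (4 * Real.sqrt Real.pi * C * Real.Gamma ((d + 1) / 2)) := by
  have : Nonempty (Fin d) := ⟨⟨0, hd⟩⟩
  have hν : P.map X = uniformSphere (EuclideanSpace ℝ (Fin d)) := hXunif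
  have : IsProbabilityMeasure (P.map X) := Measure.isProbabilityMeasure_map hX.aemeasurable
  have hbound {v : EuclideanSpace ℝ (Fin d)} (hv : ‖v‖ ≤ C) (u : sphere (0 : _) 1) :=
    abs_le.mp ((abs_inner_le_of_mem_sphere v u).trans hv)
  have hprob := measureReal_le_comp_of_indepFun hX hR hindep (neg_lt_self hC)
    (by rw [hRunif, sub_neg_eq_add, ← two_mul])
  constructor
  · rw [← measureReal_def, hprob _ (by fun_prop) (fun u => (hbound hx u).1)
      (fun u => (hbound hx u).2), hν, integral_inner_uniformSphere]
    field_simp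
    ring
  · simp only [← le_min_iff]
    rw [← measureReal_def, hprob _ (by fun_prop) (fun u => le_min (hbound hx u).1 (hbound hy u).1)
      (fun u => min_le_of_left_le (hbound hx u).2),
      integral_min_eq (integrable_inner_sphere _ x) (integrable_inner_sphere _ y), hν]
    simp_rw [← inner_sub_left]
    rw [integral_inner_uniformSphere, integral_inner_uniformSphere,
      EuclideanSpace.integral_abs_inner_uniformSphere, Fintype.card_fin]
    field_simp
    ring
end
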